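/- arXiv:1409.1705 — 8 statements merged into one kernel-verified Lean document; each statement's English description precedes it below -/
import Mathlib

section
/- Let N ≥ 1, let A be an N×N complex Hermitian matrix, and let λ be a nonzero complex number that is not a negative real, with principal argument θ = arg λ ∈ (−π, π). Then the matrix I − i·√(λ/N)·A is invertible, and its operator norm satisfies ‖(I − i·√(λ/N)·A)⁻¹‖ ≤ 1/cos(θ/2). -/
open scoped Matrix.Norms.L2Operator

/-!
Write `w = √(λ/N)`, so that `arg w = θ/2`. For Hermitian `A` the number `⟪x, A x⟫` is real, hence
`Re ⟪x, conj w • (x - i w A x)⟫ = Re w ‖x‖²`, and Cauchy–Schwarz gives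
`‖(1 - i w A) x‖ ≥ cos (θ/2) ‖x‖`. Since `|θ| < π` this lower bound is positive, so the matrix is
injective, hence invertible, and its inverse has norm at most `1 / cos (θ/2)`.
-/

namespace Complex

theorem arg_cpow_ofReal (x : ℂ) {r : ℝ} (h₁ : -Real.pi < r * arg x) (h₂ : r * arg x ≤ Real.pi) :
    arg (x ^ (r : ℂ)) = r * arg x := by
  rcases eq_or_ne x 0 with rfl | hx
  · rcases eq_or_ne r 0 with rfl | hr
    · simp
    · simp [zero_cpow (ofReal_ne_zero.mpr hr)]
  · have him : (log x * r).im = r * arg x := by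
      rw [mul_comm, im_ofReal_mul, log_im]
    rw [cpow_def_of_ne_zero hx, arg_exp, him, toIocMod_eq_self]
    exact ⟨h₁, by linarith⟩

theorem arg_cpow_one_half (x : ℂ) : arg (x ^ (1 / 2 : ℂ)) = arg x / 2 := by
  have h := arg_cpow_ofReal x (r := 1 / 2) (by linarith [neg_pi_lt_arg x, Real.pi_pos])
    (by linarith [arg_le_pi x, Real.pi_pos])
  push_cast at h
  rw [h]
  ring

theorem arg_div_natCast (x : ℂ) {n : ℕ} (hn : n ≠ 0) : arg (x / n) = arg x := by
  rw [div_eq_inv_mul, ← ofReal_natCast, ← ofReal_inv]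
  exact arg_real_mul x (by positivity)

end Complex

namespace LinearMap.IsSymmetric

open Complex

variable {E : Type*} [NormedAddCommGroup E] [InnerProductSpace ℂ E] {T : E →ₗ[ℂ] E}

theorem re_mul_norm_le_norm_mul_norm_sub_I_smul (hT : T.IsSymmetric) (w : ℂ) (x : E) :
    w.re * ‖x‖ ≤ ‖w‖ * ‖x - (I * w) • T x‖ := by
  rcases eq_or_ne x 0 with rfl | hx
  · simp
  -- `I * ‖w‖²` is purely imaginary and `⟪x, T x⟫` is real.
  have hre : (inner ℂ x ((starRingEnd ℂ) w • (x - (I * w) • T x))).re = w.re * ‖x‖ ^ 2 := by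
    have him := hT.im_inner_self_apply x
    rw [inner_smul_right, inner_sub_right, inner_smul_right, inner_self_eq_norm_sq_to_K,
      RCLike.ofReal_eq_complex_ofReal, ← ofReal_pow]
    simp only [mul_re, mul_im, sub_re, sub_im, conj_re, conj_im, I_re, I_im, RCLike.im_to_complex,
      ofReal_re, ofReal_im] at him ⊢
    rw [him]
    ring
  have hCS : w.re * ‖x‖ ^ 2 ≤ ‖x‖ * (‖w‖ * ‖x - (I * w) • T x‖) := by
    calc w.re * ‖x‖ ^ 2 ≤ ‖inner ℂ x ((starRingEnd ℂ) w • (x - (I * w) • T x))‖ :=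
          hre ▸ re_le_norm _
      _ ≤ ‖x‖ * ‖(starRingEnd ℂ) w • (x - (I * w) • T x)‖ := norm_inner_le_norm _ _
      _ = ‖x‖ * (‖w‖ * ‖x - (I * w) • T x‖) := by rw [norm_smul, norm_conj]
  have hxpos : 0 < ‖x‖ := norm_pos_iff.mpr hx
  nlinarith

theorem cos_arg_mul_norm_le_norm_sub_I_smul (hT : T.IsSymmetric) (w : ℂ) (x : E) :
    Real.cos (arg w) * ‖x‖ ≤ ‖x - (I * w) • T x‖ := by
  rcases eq_or_ne w 0 with rfl | hw
  · simp
  have hwpos : 0 < ‖w‖ := norm_pos_iff.mpr hw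
  rw [cos_arg hw, div_mul_eq_mul_div, div_le_iff₀ hwpos, mul_comm _ ‖w‖]
  exact hT.re_mul_norm_le_norm_mul_norm_sub_I_smul w x

end LinearMap.IsSymmetric

namespace Matrix

variable {n 𝕜 : Type*} [Fintype n] [DecidableEq n] [RCLike 𝕜]

theorem isUnit_and_norm_inv_le_of_norm_le_mul_norm_toEuclideanCLM (M : Matrix n n 𝕜) {C : ℝ}
    (hC : 0 ≤ C) (hM : ∀ x, ‖x‖ ≤ C * ‖toEuclideanCLM (n := n) (𝕜 := 𝕜) M x‖) :
    IsUnit M ∧ ‖M⁻¹‖ ≤ C := by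
  set e := toEuclideanCLM (n := n) (𝕜 := 𝕜)
  have he_inj : Function.Injective (e M) :=
    (ContinuousLinearMap.antilipschitz_of_bound (K := ⟨C, hC⟩) (e M) hM).injective
  have hM_unit : IsUnit M := by
    refine mulVec_injective_iff_isUnit.mp fun u v huv ↦ ?_
    apply WithLp.toLp_injective 2
    apply he_inj
    simp [e, huv]
  refine ⟨hM_unit, ContinuousLinearMap.opNorm_le_bound _ hC fun z ↦ ?_⟩
  have hright : e M (e M⁻¹ z) = z := by
    rw [← mul_apply_eq_comp, ← map_mul,
      mul_nonsing_inv M ((isUnit_iff_isUnit_det M).mp hM_unit), map_one,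
      one_apply_eq_self]
  have hbound := hM (e M⁻¹ z)
  rwa [hright] at hbound

end Matrix

theorem resolvent_bound_general (N : ℕ) (hN : 1 ≤ N)
    (A : Matrix (Fin N) (Fin N) ℂ) (hA : A.IsHermitian)
    (lam : ℂ) (hlamneg : ¬ (lam.re < 0 ∧ lam.im = 0)) :
    IsUnit ((1 : Matrix (Fin N) (Fin N) ℂ)
        - (Complex.I * (lam / (N : ℂ)) ^ ((1 : ℂ)/2)) • A) ∧
      ‖((1 : Matrix (Fin N) (Fin N) ℂ)
        - (Complex.I * (lam / (N : ℂ)) ^ ((1 : ℂ)/2)) • A)⁻¹‖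
        ≤ 1 / Real.cos (Complex.arg lam / 2) := by
  have harg : Complex.arg ((lam / (N : ℂ)) ^ ((1 : ℂ) / 2)) = Complex.arg lam / 2 := by
    rw [Complex.arg_cpow_one_half, Complex.arg_div_natCast lam (by omega)]
  have hcos : 0 < Real.cos (Complex.arg lam / 2) := by
    have hlt : Complex.arg lam < Real.pi :=
      (Complex.arg_le_pi lam).lt_of_ne fun h ↦ hlamneg (Complex.arg_eq_pi_iff.mp h)
    exact Real.cos_pos_of_mem_Ioo ⟨by linarith [Complex.neg_pi_lt_arg lam], by linarith⟩
  refine Matrix.isUnit_and_norm_inv_le_of_norm_le_mul_norm_toEuclideanCLM _ (by positivity)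
    fun x ↦ ?_
  rw [one_div, inv_mul_eq_div, le_div_iff₀ hcos, mul_comm, ← harg]
  simpa [← Matrix.coe_toEuclideanCLM_eq_toEuclideanLin] using
    (Matrix.isSymmetric_toEuclideanLin_iff.mpr hA).cos_arg_mul_norm_le_norm_sub_I_smul _ x

/-- **Bound on the resolvent** (Lemma `boundresolvent`).
For `A` an `N × N` Hermitian matrix and `λ` a nonzero complex number which is not a
negative real, with `θ = arg λ ∈ (−π, π)`, the matrix `1 - i √(λ/N) A` is invertible and
the ℓ² → ℓ² operator norm of its inverse is at most `1 / cos(θ/2)`.  Here `√` denotes the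
principal branch of the complex square root, `√z = z^(1/2)`. -/
theorem resolvent_bound (N : ℕ) (hN : 1 ≤ N)
    (A : Matrix (Fin N) (Fin N) ℂ) (hA : A.IsHermitian)
    (lam : ℂ) (hlam0 : lam ≠ 0) (hlamneg : ¬ (lam.re < 0 ∧ lam.im = 0)) :
    IsUnit ((1 : Matrix (Fin N) (Fin N) ℂ)
        - (Complex.I * (lam / (N : ℂ)) ^ ((1 : ℂ)/2)) • A) ∧
      ‖((1 : Matrix (Fin N) (Fin N) ℂ)
        - (Complex.I * (lam / (N : ℂ)) ^ ((1 : ℂ)/2)) • A)⁻¹‖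
        ≤ 1 / Real.cos (Complex.arg lam / 2) :=
  resolvent_bound_general N hN A hA lam hlamneg
end

section
/- Let σ and τ be two permutations of a finite set with k elements. Then c(σ) + c(τ) ≤ k + c(στ), where c(ρ) denotes the number of cycles of the permutation ρ. -/
/-!
Induct on `k - c(τ)`. If `τ ≠ 1`, pick `x` with `τ x ≠ x`; then `τ' = (x τx) τ` refines the
cycles of `τ` and fixes `x`, so `c(τ') ≥ c(τ) + 1`. On the other hand, the cycles of a product
`σ (a b)` refine the partition obtained from the cycles of `σ` by merging those of `a` and `b`,
so `c(σ) ≤ c(σ (x τx)) + 1`. Since `σ τ = (σ (x τx)) τ'`, the induction hypothesis for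
`σ (x τx)` and `τ'` gives the claim.
-/

/-- The setoid on `α` whose classes are the cycles (orbits) of the permutation `σ`:
`x ≈ y` iff `y = σ^i x` for some integer `i`. -/
def Equiv.Perm.sameCycleSetoid {α : Type*} (σ : Equiv.Perm α) : Setoid α :=
  ⟨σ.SameCycle,
    ⟨fun x => Equiv.Perm.SameCycle.refl σ x, fun h => h.symm, fun h h' => h.trans h'⟩⟩

/-- The number of cycles of a permutation of a finite set: the number of orbits of the
action of the cyclic group generated by it (fixed points count as cycles). -/
noncomputable def Equiv.Perm.cycleCount {α : Type*} (σ : Equiv.Perm α) : ℕ :=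
  Nat.card (Quotient σ.sameCycleSetoid)

open Equiv

namespace Setoid

variable {α : Type*}

theorem rel_swap_apply [DecidableEq α] {s : Setoid α} {a b : α} (h : s a b) (w : α) :
    s w (swap a b w) := by
  rcases eq_or_ne w a with rfl | hwa
  · rw [swap_apply_left]
    exact h
  rcases eq_or_ne w b with rfl | hwb
  · rw [swap_apply_right]
    exact s.symm' h
  · rw [swap_apply_of_ne_of_ne hwa hwb]

theorem map_of_le_surjective {s t : Setoid α} (h : s ≤ t) : Function.Surjective (map_of_le h) :=
  Quotient.ind fun x => ⟨Quotient.mk s x, rfl⟩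

theorem card_quotient_le_of_le [Finite α] {s t : Setoid α} (h : s ≤ t) :
    Nat.card (Quotient t) ≤ Nat.card (Quotient s) :=
  Nat.card_le_card_of_surjective _ (map_of_le_surjective h)

theorem card_quotient_lt_of_le [Finite α] {s t : Setoid α} (h : s ≤ t) {x y : α} (hst : t x y)
    (hs : ¬ s x y) : Nat.card (Quotient t) < Nat.card (Quotient s) := by
  refine lt_of_not_ge fun hle => hs (Quotient.exact ?_)
  exact ((map_of_le_surjective h).bijective_of_nat_card_le hle).injective (Quotient.sound hst)

def mergeClasses (s : Setoid α) (a b : α) : Setoid α where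
  r u v := s u v ∨ ((s a u ∨ s b u) ∧ (s a v ∨ s b v))
  iseqv := by
    have closed {u v : α} (huv : s u v) : s a u ∨ s b u → s a v ∨ s b v :=
      Or.imp (s.trans' · huv) (s.trans' · huv)
    refine ⟨fun u => .inl (s.refl' u), ?_, ?_⟩
    · rintro u v (huv | ⟨hu, hv⟩)
      exacts [.inl (s.symm' huv), .inr ⟨hv, hu⟩]
    · rintro u v w (huv | ⟨hu, hv⟩) (hvw | ⟨hv', hw⟩)
      exacts [.inl (s.trans' huv hvw), .inr ⟨closed (s.symm' huv) hv', hw⟩,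
        .inr ⟨hu, closed hvw hv⟩, .inr ⟨hu, hw⟩]

theorem le_mergeClasses (s : Setoid α) (a b : α) : s ≤ s.mergeClasses a b :=
  fun _ _ => .inl

theorem mergeClasses_rel (s : Setoid α) (a b : α) : s.mergeClasses a b a b :=
  .inr ⟨.inl (s.refl' a), .inr (s.refl' b)⟩

theorem card_quotient_le_card_quotient_mergeClasses_add_one [Finite α] (s : Setoid α) (a b : α) :
    Nat.card (Quotient s) ≤ Nat.card (Quotient (s.mergeClasses a b)) + 1 := by
  classical
  let g (q : Quotient s) : Option (Quotient (s.mergeClasses a b)) :=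
    if q = Quotient.mk s b then none else some (map_of_le (s.le_mergeClasses a b) q)
  have hg : Function.Injective g := by
    refine Quotient.ind₂ fun u v huv => ?_
    simp only [g] at huv
    split_ifs at huv with hu hv hv
    · exact hu.trans hv.symm
    · rw [Option.some_inj] at huv
      -- outside the class of `b`, the merged relation is `s` itself
      rcases Quotient.exact huv with h | ⟨hau | hbu, hav | hbv⟩
      · exact Quotient.sound h
      · exact Quotient.sound (s.trans' (s.symm' hau) hav)
      all_goals first
        | exact absurd (Quotient.sound (s.symm' hbu)) hu
        | exact absurd (Quotient.sound (s.symm' hbv)) hv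
  calc Nat.card (Quotient s) ≤ Nat.card (Option (Quotient (s.mergeClasses a b))) :=
        Nat.card_le_card_of_injective g hg
    _ = Nat.card (Quotient (s.mergeClasses a b)) + 1 := Finite.card_option

end Setoid

namespace Equiv.Perm

variable {α : Type*}

theorem sameCycleSetoid_le_of_forall_rel_apply {π : Perm α} {s : Setoid α}
    (h : ∀ x, s x (π x)) : π.sameCycleSetoid ≤ s := by
  rintro x _ ⟨i, rfl⟩
  induction i using Int.induction_on with
  | zero => exact s.refl' x
  | succ n ih =>
    rw [add_comm, zpow_one_add, mul_apply]
    exact s.trans' ih (h _)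
  | pred n ih =>
    rw [sub_eq_neg_add, zpow_add, zpow_neg_one, mul_apply]
    have := h (π⁻¹ ((π ^ (-(n : ℤ))) x))
    rw [Perm.inv_def, apply_symm_apply] at this
    exact s.trans' ih (s.symm' this)

theorem cycleCount_one : (1 : Perm α).cycleCount = Nat.card α := by
  have : (1 : Perm α).sameCycleSetoid = ⊥ := Setoid.ext fun _ _ => sameCycle_one
  rw [cycleCount, this]
  exact Nat.card_congr Setoid.quotientBotEquiv

variable [Finite α]

theorem cycleCount_le_card (π : Perm α) : π.cycleCount ≤ Nat.card α :=
  Nat.card_le_card_of_surjective _ Quotient.mk_surjective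

theorem cycleCount_le_cycleCount_mul_swap_add_one [DecidableEq α] (σ : Perm α) (a b : α) :
    σ.cycleCount ≤ (σ * swap a b).cycleCount + 1 := by
  set s := σ.sameCycleSetoid.mergeClasses a b
  have hstep (x : α) : s x ((σ * swap a b) x) :=
    s.trans' (Setoid.rel_swap_apply (σ.sameCycleSetoid.mergeClasses_rel a b) x)
      (σ.sameCycleSetoid.le_mergeClasses a b ⟨1, rfl⟩)
  calc σ.cycleCount ≤ Nat.card (Quotient s) + 1 :=
        σ.sameCycleSetoid.card_quotient_le_card_quotient_mergeClasses_add_one a b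
    _ ≤ (σ * swap a b).cycleCount + 1 :=
        Nat.add_le_add_right (Setoid.card_quotient_le_of_le
          (sameCycleSetoid_le_of_forall_rel_apply hstep)) 1

theorem cycleCount_lt_cycleCount_swap_mul [DecidableEq α] {τ : Perm α} {x : α} (hx : τ x ≠ x) :
    τ.cycleCount < (swap x (τ x) * τ).cycleCount := by
  have hxτx : τ.SameCycle x (τ x) := ⟨1, rfl⟩
  have hle : (swap x (τ x) * τ).sameCycleSetoid ≤ τ.sameCycleSetoid :=
    sameCycleSetoid_le_of_forall_rel_apply fun z =>
      SameCycle.trans ⟨1, rfl⟩ (Setoid.rel_swap_apply (s := τ.sameCycleSetoid) hxτx (τ z))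
  -- `x` is split off its `τ`-cycle as a fixed point
  have hfix : Function.IsFixedPt (swap x (τ x) * τ) x := by
    simp [Function.IsFixedPt]
  exact Setoid.card_quotient_lt_of_le hle hxτx fun h => hx (h.eq_of_left hfix).symm

theorem cycleCount_add_cycleCount_le_card_add (σ τ : Perm α) :
    σ.cycleCount + τ.cycleCount ≤ Nat.card α + (σ * τ).cycleCount := by
  classical
  rcases eq_or_ne τ 1 with rfl | hτ
  · rw [cycleCount_one, mul_one, add_comm]
  obtain ⟨x, hx⟩ : ∃ x, τ x ≠ x := DFunLike.ne_iff.mp hτ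
  have hsplit := cycleCount_lt_cycleCount_swap_mul hx
  have hmerge := cycleCount_le_cycleCount_mul_swap_add_one σ x (τ x)
  have ih := cycleCount_add_cycleCount_le_card_add (σ * swap x (τ x)) (swap x (τ x) * τ)
  rw [mul_assoc, swap_mul_self_mul] at ih
  omega
termination_by Nat.card α - τ.cycleCount
decreasing_by exact Nat.sub_lt_sub_left (hsplit.trans_le (cycleCount_le_card _)) hsplit

end Equiv.Perm

/-- **Subadditivity of the cycle defect** (Lemma `permutationinequalitylemma`):
for permutations `σ, τ` of a finite set with `k` elements,
`c(σ) + c(τ) ≤ k + c(στ)`, where `c` is the number of cycles. -/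
theorem cycleCount_add_cycleCount_le {α : Type*} [Fintype α] (k : ℕ)
    (hk : Fintype.card α = k) (σ τ : Equiv.Perm α) :
    σ.cycleCount + τ.cycleCount ≤ k + (σ * τ).cycleCount := by
  simpa [← hk, Nat.card_eq_fintype_card] using σ.cycleCount_add_cycleCount_le_card_add τ
end

section
/- (Brydges–Kennedy–Abdesselam–Rivasseau forest formula.) Let n ≥ 1 and let φ : ℝ^P → ℝ be a smooth (infinitely differentiable) function, where P is the set of unordered pairs {i,j} of distinct elements of {1,…,n}. Then φ(1,…,1) = Σ_F ∫_{[0,1]^{E(F)}} ( ∂^{|E(F)|} φ / ∏_{e ∈ E(F)} ∂x_e )( v^F(t) ) ∏_{e ∈ E(F)} dt_e, where: the sum runs over all forests F on the vertex set {1,…,n} (simple graphs with no cycles), E(F) is the edge set of F, |E(F)| its cardinality, and for t ∈ [0,1]^{E(F)} the point v^F(t) ∈ ℝ^P is defined by v^F(t)_{{i,j}} = min{ t_e : e an edge on the unique path in F joining i and j } if i and j lie in the same connected component of F, and v^F(t)_{{i,j}} = 0 if they do not. -/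
open MeasureTheory

/-- The coordinates of the BKAR interpolation: unordered pairs `{i,j}` of distinct
elements of `{1,…,n}`, i.e. non-diagonal elements of `Sym2 (Fin n)`. -/
abbrev BKAR.EdgeIdx (n : ℕ) := {e : Sym2 (Fin n) // ¬ e.IsDiag}

namespace BKAR

/-- Extension of a family of edge variables to all of `Sym2 (Fin n)` (by `1` on the
diagonal; only the off-diagonal values ever matter). -/
noncomputable def extEdge (n : ℕ) (t : EdgeIdx n → ℝ) : Sym2 (Fin n) → ℝ :=
  fun e => if h : e.IsDiag then 1 else t ⟨e, h⟩

/-- For a forest `F` on `{1,…,n}`, the point `v^F(t)`: its `{i,j}` coordinate is the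
minimum of `t_e` over the edges `e` of the unique path in `F` joining `i` and `j` when
`i` and `j` are in the same connected component of `F`, and `0` otherwise.

It is here expressed as the supremum, over all walks `w` from `i` to `j` in `F`, of the
minimum of the `t_e` over the edges of `w` (with the convention `min ∅ = 1`): for a
forest and `t ∈ [0,1]^{E(F)}` every walk from `i` to `j` passes through every edge of the
unique path joining them, so this supremum is attained on that path; when `i` and `j`
are not connected, the set is empty and (by the convention `sSup ∅ = 0` in `ℝ`) the
coordinate is `0`. -/
noncomputable def vF (n : ℕ) (F : SimpleGraph (Fin n)) (t : EdgeIdx n → ℝ)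
    (p : EdgeIdx n) : ℝ :=
  sSup {r : ℝ | ∃ i j : Fin n, (p : Sym2 (Fin n)) = s(i, j) ∧
    ∃ w : F.Walk i j, r = ((w.edges.map (extEdge n t)).foldr min 1)}

/-- The edges of a graph on `{1,…,n}`, as a finset of coordinates. -/
noncomputable def edgesOf (n : ℕ) (F : SimpleGraph (Fin n)) : Finset (EdgeIdx n) :=
  (Set.toFinite {e : EdgeIdx n | (e : Sym2 (Fin n)) ∈ F.edgeSet}).toFinset

/-- Partial derivative of `ψ : ℝ^P → ℝ` with respect to the coordinate `e`. -/
noncomputable def pderivE (n : ℕ) (e : EdgeIdx n) (ψ : (EdgeIdx n → ℝ) → ℝ) :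
    (EdgeIdx n → ℝ) → ℝ :=
  fun x => fderiv ℝ ψ x (Pi.single e 1)

/-- The mixed partial derivative `∂^{|E(F)|} φ / ∏_{e ∈ E(F)} ∂x_e` of a function with
respect to the (distinct) coordinates indexed by the edges of a forest `F` (taken in
some fixed enumeration of the edges; for a smooth function the order is irrelevant). -/
noncomputable def mixedDeriv (n : ℕ) (F : SimpleGraph (Fin n))
    (φ : (EdgeIdx n → ℝ) → ℝ) : (EdgeIdx n → ℝ) → ℝ :=
  (edgesOf n F).toList.foldr (pderivE n) φ

end BKAR

namespace BKARaux
open BKAR Set SimpleGraph Function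
open scoped Classical

/-! ### list minima -/

noncomputable def minL (l : List ℝ) : ℝ := l.foldr min 1

@[simp] lemma minL_nil : minL [] = 1 := rfl
lemma minL_cons (a : ℝ) (l : List ℝ) : minL (a :: l) = min a (minL l) := rfl

lemma minL_le_one (l : List ℝ) : minL l ≤ 1 := by
  induction l with
  | nil => simp
  | cons a l ih => exact (min_le_right _ _).trans ih

lemma minL_le_of_mem {l : List ℝ} {x : ℝ} (h : x ∈ l) : minL l ≤ x := by
  induction l with
  | nil => simp at h
  | cons a l ih =>
    rcases List.mem_cons.1 h with rfl | h
    · exact min_le_left _ _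
    · exact (min_le_right _ _).trans (ih h)

lemma le_minL {l : List ℝ} {a : ℝ} (h1 : a ≤ 1) (h : ∀ x ∈ l, a ≤ x) : a ≤ minL l := by
  induction l with
  | nil => simpa using h1
  | cons b l ih =>
    exact le_min (h b (List.mem_cons_self)) (ih fun x hx => h x (List.mem_cons_of_mem _ hx))

variable {n : ℕ}

/-! ### basic graph/coordinate notions -/

lemma exists_rep (p : EdgeIdx n) : ∃ i j : Fin n, (p : Sym2 (Fin n)) = s(i, j) ∧ i ≠ j := by
  obtain ⟨e, he⟩ := p
  induction e using Sym2.ind with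
  | _ i j => exact ⟨i, j, rfl, by simpa [Sym2.mk_isDiag_iff] using he⟩

def qConn (F : SimpleGraph (Fin n)) (p : EdgeIdx n) : Prop :=
  ∀ i j : Fin n, (p : Sym2 (Fin n)) = s(i, j) → F.Reachable i j

lemma qConn_iff {F : SimpleGraph (Fin n)} {p : EdgeIdx n} {i j : Fin n}
    (hp : (p : Sym2 (Fin n)) = s(i, j)) : qConn F p ↔ F.Reachable i j := by
  constructor
  · intro h; exact h i j hp
  · intro h i' j' hp'
    have h2 : s(i, j) = s(i', j') := hp ▸ hp'
    rcases Sym2.eq_iff.1 h2 with ⟨rfl, rfl⟩ | ⟨rfl, rfl⟩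
    · exact h
    · exact h.symm

lemma mem_edgesOf {F : SimpleGraph (Fin n)} {e : EdgeIdx n} :
    e ∈ edgesOf n F ↔ (e : Sym2 (Fin n)) ∈ F.edgeSet := by
  simp [edgesOf, Set.Finite.mem_toFinset]

lemma extEdge_eq {F : SimpleGraph (Fin n)} {t : EdgeIdx n → ℝ} {e : Sym2 (Fin n)}
    (he : e ∈ F.edgeSet) : extEdge n t e = t ⟨e, F.not_isDiag_of_mem_edgeSet he⟩ := by
  simp only [extEdge, dif_neg (F.not_isDiag_of_mem_edgeSet he)]

/-! ### vF lemmas -/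

lemma vF_eq_path {F : SimpleGraph (Fin n)} (hF : F.IsAcyclic) {p : EdgeIdx n} {i j : Fin n}
    (hp : (p : Sym2 (Fin n)) = s(i, j)) (w : F.Walk i j) (hw : w.IsPath) (t : EdgeIdx n → ℝ) :
    vF n F t p = minL (w.edges.map (extEdge n t)) := by
  have path_sub : ∀ (w' : F.Walk i j), w.edges ⊆ w'.edges := by
    intro w'
    have h1 : (⟨w'.bypass, w'.bypass_isPath⟩ : F.Path i j) = ⟨w, hw⟩ := hF.path_unique _ _
    have h2 : w'.bypass = w := congrArg Subtype.val h1
    rw [← h2]; exact w'.edges_bypass_subset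
  have hub : ∀ r ∈ {r : ℝ | ∃ i' j' : Fin n, (p : Sym2 (Fin n)) = s(i', j') ∧
      ∃ w' : F.Walk i' j', r = ((w'.edges.map (extEdge n t)).foldr min 1)},
      r ≤ minL (w.edges.map (extEdge n t)) := by
    rintro r ⟨i', j', hp', w', rfl⟩
    have h2 : s(i, j) = s(i', j') := hp ▸ hp'
    have hsub : w.edges ⊆ w'.edges := by
      rcases Sym2.eq_iff.1 h2 with ⟨rfl, rfl⟩ | ⟨rfl, rfl⟩
      · exact path_sub w'
      · intro e he
        have : e ∈ w.reverse.edges := by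
          rw [SimpleGraph.Walk.edges_reverse, List.mem_reverse]; exact he
        have hrsub : w.reverse.edges ⊆ w'.edges := by
          intro e' he'
          have h1 : (⟨w'.bypass, w'.bypass_isPath⟩ : F.Path j i) = ⟨w.reverse, hw.reverse⟩ :=
            hF.path_unique _ _
          have h2 : w'.bypass = w.reverse := congrArg Subtype.val h1
          exact w'.edges_bypass_subset (h2 ▸ he')
        exact hrsub this
    refine le_minL (minL_le_one _) ?_
    intro x hx
    rcases List.mem_map.1 hx with ⟨e, he, rfl⟩
    exact minL_le_of_mem (List.mem_map_of_mem (hsub he))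
  have hmem : minL (w.edges.map (extEdge n t)) ∈ {r : ℝ | ∃ i' j' : Fin n,
      (p : Sym2 (Fin n)) = s(i', j') ∧
      ∃ w' : F.Walk i' j', r = ((w'.edges.map (extEdge n t)).foldr min 1)} :=
    ⟨i, j, hp, w, rfl⟩
  exact le_antisymm (csSup_le ⟨_, hmem⟩ hub) (le_csSup ⟨_, hub⟩ hmem)

lemma vF_eq_zero {F : SimpleGraph (Fin n)} {p : EdgeIdx n} {i j : Fin n}
    (hp : (p : Sym2 (Fin n)) = s(i, j)) (h : ¬ F.Reachable i j) (t : EdgeIdx n → ℝ) :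
    vF n F t p = 0 := by
  have : {r : ℝ | ∃ i' j' : Fin n, (p : Sym2 (Fin n)) = s(i', j') ∧
      ∃ w' : F.Walk i' j', r = ((w'.edges.map (extEdge n t)).foldr min 1)} = ∅ := by
    ext r
    simp only [Set.mem_setOf_eq, Set.mem_empty_iff_false, iff_false]
    rintro ⟨i', j', hp', w', rfl⟩
    have h2 : s(i, j) = s(i', j') := hp ▸ hp'
    rcases Sym2.eq_iff.1 h2 with ⟨rfl, rfl⟩ | ⟨rfl, rfl⟩
    · exact h ⟨w'⟩
    · exact h ⟨w'.reverse⟩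
  rw [vF, this, Real.sSup_empty]

lemma vF_congr {F : SimpleGraph (Fin n)} {t t' : EdgeIdx n → ℝ}
    (h : ∀ e : EdgeIdx n, (e : Sym2 (Fin n)) ∈ F.edgeSet → t e = t' e) (p : EdgeIdx n) :
    vF n F t p = vF n F t' p := by
  have key : ∀ (i j : Fin n) (w : F.Walk i j),
      w.edges.map (extEdge n t) = w.edges.map (extEdge n t') := by
    intro i j w
    refine List.map_congr_left ?_
    intro e he
    have heE : e ∈ F.edgeSet := w.edges_subset_edgeSet he
    rw [extEdge_eq heE, extEdge_eq heE]
    exact h _ heE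
  unfold vF
  congr 1
  ext r
  constructor
  · rintro ⟨i, j, hp, w, rfl⟩; exact ⟨i, j, hp, w, by rw [← key]⟩
  · rintro ⟨i, j, hp, w, rfl⟩; exact ⟨i, j, hp, w, by rw [key]⟩

/-! ### graph surgery -/

def Fplus (F : SimpleGraph (Fin n)) (q : EdgeIdx n) : SimpleGraph (Fin n) :=
  F ⊔ fromEdgeSet {(q : Sym2 (Fin n))}

def Fminus (F : SimpleGraph (Fin n)) (q : EdgeIdx n) : SimpleGraph (Fin n) :=
  F.deleteEdges {(q : Sym2 (Fin n))}

lemma edgeSet_Fplus (F : SimpleGraph (Fin n)) (q : EdgeIdx n) :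
    (Fplus F q).edgeSet = insert (q : Sym2 (Fin n)) F.edgeSet := by
  ext e
  simp only [Fplus, edgeSet_sup, edgeSet_fromEdgeSet, Set.mem_union, Set.mem_diff,
    Set.mem_singleton_iff, Set.mem_insert_iff, Set.mem_setOf_eq]
  constructor
  · rintro (h | ⟨rfl, -⟩)
    · exact Or.inr h
    · exact Or.inl rfl
  · rintro (rfl | h)
    · exact Or.inr ⟨rfl, q.2⟩
    · exact Or.inl h

lemma edgesOf_Fplus (F : SimpleGraph (Fin n)) (q : EdgeIdx n) :
    edgesOf n (Fplus F q) = insert q (edgesOf n F) := by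
  ext e
  simp only [mem_edgesOf, edgeSet_Fplus, Set.mem_insert_iff, Finset.mem_insert,
    ← Subtype.coe_inj]

lemma edgeSet_Fminus (F : SimpleGraph (Fin n)) (q : EdgeIdx n) :
    (Fminus F q).edgeSet = F.edgeSet \ {(q : Sym2 (Fin n))} := by
  ext e
  simp only [Fminus, deleteEdges, edgeSet_sdiff, edgeSet_fromEdgeSet, Set.mem_diff,
    Set.mem_singleton_iff, Set.mem_setOf_eq]
  constructor
  · rintro ⟨he, h2⟩
    refine ⟨he, fun hh => h2 ⟨hh, ?_⟩⟩
    rw [hh] at he ⊢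
    exact q.2
  · rintro ⟨he, h2⟩
    exact ⟨he, fun hh => h2 hh.1⟩

lemma edgesOf_Fminus (F : SimpleGraph (Fin n)) (q : EdgeIdx n) :
    edgesOf n (Fminus F q) = (edgesOf n F).erase q := by
  ext e
  simp only [mem_edgesOf, edgeSet_Fminus, Set.mem_diff, Set.mem_singleton_iff,
    Finset.mem_erase]
  constructor
  · rintro ⟨h1, h2⟩
    exact ⟨fun hh => h2 (by rw [hh]), h1⟩
  · rintro ⟨h1, h2⟩
    exact ⟨h2, fun hh => h1 (Subtype.coe_injective hh)⟩

lemma Fplus_Fminus {F : SimpleGraph (Fin n)} {q : EdgeIdx n} (hq : q ∈ edgesOf n F) :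
    Fplus (Fminus F q) q = F := by
  ext a b
  simp only [Fplus, Fminus, sup_adj, deleteEdges_adj, fromEdgeSet_adj,
    Set.mem_singleton_iff]
  constructor
  · rintro (⟨h, -⟩ | ⟨h, -⟩)
    · exact h
    · rw [← mem_edgeSet, h]
      exact mem_edgesOf.1 hq
  · intro h
    by_cases hh : s(a, b) = (q : Sym2 (Fin n))
    · exact Or.inr ⟨hh, h.ne⟩
    · exact Or.inl ⟨h, hh⟩

lemma Fminus_Fplus {F : SimpleGraph (Fin n)} {q : EdgeIdx n} (hq : q ∉ edgesOf n F) :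
    Fminus (Fplus F q) q = F := by
  ext a b
  simp only [Fplus, Fminus, sup_adj, deleteEdges_adj, fromEdgeSet_adj,
    Set.mem_singleton_iff]
  constructor
  · rintro ⟨h1 | ⟨h1, -⟩, h2⟩
    · exact h1
    · exact absurd h1 h2
  · intro h
    refine ⟨Or.inl h, fun hh => hq (mem_edgesOf.2 ?_)⟩
    rw [← hh]
    exact h

lemma not_mem_edgesOf_of_not_qConn {F : SimpleGraph (Fin n)} {q : EdgeIdx n}
    (h : ¬ qConn F q) : q ∉ edgesOf n F := by
  intro hmem
  apply h
  intro i j hp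
  have : s(i, j) ∈ F.edgeSet := hp ▸ mem_edgesOf.1 hmem
  exact ((mem_edgeSet _).1 this).reachable

lemma acyclic_of_le {G H : SimpleGraph (Fin n)} (hGH : G ≤ H) (hH : H.IsAcyclic) :
    G.IsAcyclic := by
  intro v c hc
  have hsub : ∀ e ∈ c.edges, e ∈ H.edgeSet := fun e he =>
    (edgeSet_subset_edgeSet.2 hGH) (c.edges_subset_edgeSet he)
  exact hH (c.transfer H hsub) (hc.transfer hsub)

lemma acyclic_Fplus {F : SimpleGraph (Fin n)} (hF : F.IsAcyclic) {q : EdgeIdx n}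
    (h : ¬ qConn F q) : (Fplus F q).IsAcyclic := by
  obtain ⟨i, j, hqij, hij⟩ := exists_rep q
  have hnr : ¬ F.Reachable i j := fun hr => h ((qConn_iff hqij).2 hr)
  intro v c hc
  by_cases he : (q : Sym2 (Fin n)) ∈ c.edges
  · have hadj : (Fplus F q).Adj i j := by
      rw [← mem_edgeSet, ← hqij, edgeSet_Fplus]
      exact Set.mem_insert _ _
    have hbr : (Fplus F q).IsBridge s(i, j) := by
      rw [isBridge_iff]
      refine fun hr => hnr (hr.mono ?_)
      intro a b hab
      rw [deleteEdges_adj] at hab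
      obtain ⟨hab1, hab2⟩ := hab
      rcases (sup_adj _ _ _ _).1 hab1 with h1 | h1
      · exact h1
      · exfalso
        apply hab2
        rw [fromEdgeSet_adj] at h1
        rw [Set.mem_singleton_iff, ← hqij]; exact h1.1
    rw [isBridge_iff_adj_and_forall_cycle_notMem ((mem_edgeSet _).2 hadj)] at hbr
    exact hbr c hc (hqij ▸ he)
  · have hsub : ∀ e ∈ c.edges, e ∈ F.edgeSet := by
      intro e hee
      have h2 := c.edges_subset_edgeSet hee
      rw [edgeSet_Fplus] at h2
      rcases h2 with rfl | h2
      · exact absurd hee he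
      · exact h2
    exact hF (c.transfer F hsub) (hc.transfer hsub)

lemma not_qConn_Fminus {F : SimpleGraph (Fin n)} (hF : F.IsAcyclic) {q : EdgeIdx n}
    (hq : q ∈ edgesOf n F) : ¬ qConn (Fminus F q) q := by
  obtain ⟨i, j, hqij, hij⟩ := exists_rep q
  intro hcon
  have hr : (Fminus F q).Reachable i j := hcon i j hqij
  have hadj : F.Adj i j := (mem_edgeSet _).1 (hqij ▸ mem_edgesOf.1 hq)
  have hbr := (isAcyclic_iff_forall_adj_isBridge.1 hF) hadj
  rw [isBridge_iff] at hbr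
  apply hbr
  have : Fminus F q = F.deleteEdges {s(i, j)} := by
    rw [Fminus, ← hqij]
  rwa [this] at hr

/-! ### the interpolation point -/

noncomputable def chi (F : SimpleGraph (Fin n)) : EdgeIdx n → ℝ :=
  fun p => if qConn F p then 0 else 1

noncomputable def mE (F : SimpleGraph (Fin n)) (t : EdgeIdx n → ℝ) : ℝ :=
  minL ((edgesOf n F).toList.map t)

noncomputable def W (F : SimpleGraph (Fin n)) (t : EdgeIdx n → ℝ) (s : ℝ) :
    EdgeIdx n → ℝ := fun p => vF n F t p + s * chi F p

noncomputable def Qd (F : SimpleGraph (Fin n)) : Finset (EdgeIdx n) :=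
  Finset.univ.filter (fun p => ¬ qConn F p)

lemma mE_le (F : SimpleGraph (Fin n)) (t : EdgeIdx n → ℝ) {e : EdgeIdx n}
    (he : e ∈ edgesOf n F) : mE F t ≤ t e := by
  exact minL_le_of_mem (List.mem_map_of_mem (Finset.mem_toList.2 he))

lemma mE_le_one (F : SimpleGraph (Fin n)) (t : EdgeIdx n → ℝ) : mE F t ≤ 1 := minL_le_one _

lemma le_mE {F : SimpleGraph (Fin n)} {t : EdgeIdx n → ℝ} {a : ℝ} (h1 : a ≤ 1)
    (h : ∀ e ∈ edgesOf n F, a ≤ t e) : a ≤ mE F t := by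
  refine le_minL h1 ?_
  rintro x hx
  rcases List.mem_map.1 hx with ⟨e, he, rfl⟩
  exact h e (Finset.mem_toList.1 he)

lemma mE_update {F : SimpleGraph (Fin n)} {q : EdgeIdx n} (hq : q ∉ edgesOf n F)
    (t : EdgeIdx n → ℝ) (s : ℝ) : mE F (update t q s) = mE F t := by
  unfold mE
  congr 1
  refine List.map_congr_left ?_
  intro e he
  have hne : e ≠ q := fun hh => hq (hh ▸ Finset.mem_toList.1 he)
  exact Function.update_of_ne hne _ _

lemma W_zero (F : SimpleGraph (Fin n)) (t : EdgeIdx n → ℝ) : W F t 0 = vF n F t := by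
  funext p; simp [W]

/-- The key compatibility: freezing a new edge `q` at the current value `s`. -/
lemma W_update {F : SimpleGraph (Fin n)} (hF : F.IsAcyclic) {q : EdgeIdx n}
    (hq : ¬ qConn F q) {t : EdgeIdx n → ℝ} {s : ℝ} (hs1 : s ≤ 1)
    (hs : ∀ e ∈ edgesOf n F, s ≤ t e) :
    W (Fplus F q) (update t q s) s = W F t s := by
  funext p
  obtain ⟨a, b, hpab, hab⟩ := exists_rep p
  obtain ⟨i, j, hqij, hij⟩ := exists_rep q
  have hnr : ¬ F.Reachable i j := fun hr => hq ((qConn_iff hqij).2 hr)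
  have hqE : (q : Sym2 (Fin n)) ∉ F.edgeSet := fun hmem =>
    hnr (((mem_edgeSet _).1 (hqij ▸ hmem)).reachable)
  have hF' : (Fplus F q).IsAcyclic := acyclic_Fplus hF hq
  have hle : F ≤ Fplus F q := le_sup_left
  by_cases hcab : F.Reachable a b
  · have hc'ab : (Fplus F q).Reachable a b := hcab.mono hle
    have h1 : chi F p = 0 := if_pos ((qConn_iff hpab).2 hcab)
    have h1' : chi (Fplus F q) p = 0 := if_pos ((qConn_iff hpab).2 hc'ab)
    obtain ⟨w0⟩ := hcab
    obtain ⟨w, hwp⟩ := w0.toPath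
    have hsub : ∀ e ∈ w.edges, e ∈ (Fplus F q).edgeSet := fun e he => by
      rw [edgeSet_Fplus]; exact Set.mem_insert_of_mem _ (w.edges_subset_edgeSet he)
    have hvF : vF n F t p = minL (w.edges.map (extEdge n t)) := vF_eq_path hF hpab w hwp t
    have hvF' : vF n (Fplus F q) (update t q s) p
        = minL ((w.transfer _ hsub).edges.map (extEdge n (update t q s))) :=
      vF_eq_path hF' hpab _ (hwp.transfer hsub) _
    rw [SimpleGraph.Walk.edges_transfer] at hvF'
    have hmap : w.edges.map (extEdge n (update t q s)) = w.edges.map (extEdge n t) := by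
      refine List.map_congr_left ?_
      intro e he
      have heE : e ∈ F.edgeSet := w.edges_subset_edgeSet he
      rw [extEdge_eq heE, extEdge_eq heE]
      refine Function.update_of_ne ?_ _ _
      intro hh
      exact hqE (by rw [← congrArg Subtype.val hh]; exact heE)
    show vF n (Fplus F q) (update t q s) p + s * chi (Fplus F q) p
        = vF n F t p + s * chi F p
    rw [h1, h1', hvF, hvF', hmap]
  · by_cases hc'ab : (Fplus F q).Reachable a b
    · have h1 : chi F p = 1 := if_neg (fun hcon => hcab ((qConn_iff hpab).1 hcon))
      have h1' : chi (Fplus F q) p = 0 := if_pos ((qConn_iff hpab).2 hc'ab)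
      have hv : vF n F t p = 0 := vF_eq_zero hpab hcab t
      obtain ⟨w0⟩ := hc'ab
      obtain ⟨w, hwp⟩ := w0.toPath
      have hqmemE : (q : Sym2 (Fin n)) ∈ (Fplus F q).edgeSet := by
        rw [edgeSet_Fplus]; exact Set.mem_insert _ _
      have hextq : extEdge n (update t q s) (q : Sym2 (Fin n)) = s := by
        rw [extEdge_eq hqmemE]
        have h5 : (⟨(q : Sym2 (Fin n)), (Fplus F q).not_isDiag_of_mem_edgeSet hqmemE⟩
            : EdgeIdx n) = q := Subtype.coe_eta _ _
        rw [h5, Function.update_self]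
      have hqmem : (q : Sym2 (Fin n)) ∈ w.edges := by
        by_contra hqm
        apply hcab
        have hsub : ∀ e ∈ w.edges, e ∈ F.edgeSet := by
          intro e he
          have h2 := w.edges_subset_edgeSet he
          rw [edgeSet_Fplus] at h2
          rcases h2 with rfl | h2
          · exact absurd he hqm
          · exact h2
        exact ⟨w.transfer F hsub⟩
      have hvF' : vF n (Fplus F q) (update t q s) p
          = minL (w.edges.map (extEdge n (update t q s))) := vF_eq_path hF' hpab w hwp _
      have hvals : ∀ x ∈ w.edges.map (extEdge n (update t q s)), s ≤ x := by
        rintro x hx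
        rcases List.mem_map.1 hx with ⟨e, he, rfl⟩
        have heE : e ∈ (Fplus F q).edgeSet := w.edges_subset_edgeSet he
        rw [edgeSet_Fplus] at heE
        rcases heE with rfl | heE
        · rw [hextq]
        · rw [extEdge_eq heE]
          have hne : (⟨e, F.not_isDiag_of_mem_edgeSet heE⟩ : EdgeIdx n) ≠ q := by
            intro hh
            exact hqE (by rw [← congrArg Subtype.val hh]; exact heE)
          rw [Function.update_of_ne hne]
          exact hs _ (mem_edgesOf.2 heE)
      have hmem_s : s ∈ w.edges.map (extEdge n (update t q s)) :=
        List.mem_map.2 ⟨(q : Sym2 (Fin n)), hqmem, hextq⟩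
      have hminL : minL (w.edges.map (extEdge n (update t q s))) = s :=
        le_antisymm (minL_le_of_mem hmem_s) (le_minL hs1 hvals)
      show vF n (Fplus F q) (update t q s) p + s * chi (Fplus F q) p
          = vF n F t p + s * chi F p
      rw [h1, h1', hv, hvF', hminL]
      ring
    · have h1 : chi F p = 1 := if_neg (fun hcon => hcab ((qConn_iff hpab).1 hcon))
      have h1' : chi (Fplus F q) p = 1 := if_neg (fun hcon => hc'ab ((qConn_iff hpab).1 hcon))
      show vF n (Fplus F q) (update t q s) p + s * chi (Fplus F q) p
          = vF n F t p + s * chi F p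
      rw [h1, h1', vF_eq_zero hpab hcab, vF_eq_zero hpab hc'ab]



/-! ### the cube -/

def S (n : ℕ) : Set (EdgeIdx n → ℝ) := Set.univ.pi fun _ : EdgeIdx n => Set.Icc (0:ℝ) 1

lemma mem_S_iff {t : EdgeIdx n → ℝ} : t ∈ S n ↔ ∀ e, t e ∈ Set.Icc (0:ℝ) 1 :=
  Set.mem_univ_pi

/-! ### smoothness -/

lemma contDiff_pderivE {ψ : (EdgeIdx n → ℝ) → ℝ} (e : EdgeIdx n) (hψ : ContDiff ℝ (⊤ : ℕ∞) ψ) :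
    ContDiff ℝ (⊤ : ℕ∞) (pderivE n e ψ) := by
  have h1 : ContDiff ℝ (⊤ : ℕ∞) (fderiv ℝ ψ) := hψ.fderiv_right (by simp)
  exact h1.clm_apply contDiff_const

lemma contDiff_foldr {φ : (EdgeIdx n → ℝ) → ℝ} (hφ : ContDiff ℝ (⊤ : ℕ∞) φ)
    (l : List (EdgeIdx n)) : ContDiff ℝ (⊤ : ℕ∞) (l.foldr (pderivE n) φ) := by
  induction l with
  | nil => exact hφ
  | cons a l ih => exact contDiff_pderivE a ih

lemma contDiff_mixedDeriv {φ : (EdgeIdx n → ℝ) → ℝ} (hφ : ContDiff ℝ (⊤ : ℕ∞) φ)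
    (F : SimpleGraph (Fin n)) : ContDiff ℝ (⊤ : ℕ∞) (mixedDeriv n F φ) :=
  contDiff_foldr hφ _

lemma pderivE_comm {ψ : (EdgeIdx n → ℝ) → ℝ} (hψ : ContDiff ℝ (⊤ : ℕ∞) ψ) (a b : EdgeIdx n) :
    pderivE n a (pderivE n b ψ) = pderivE n b (pderivE n a ψ) := by
  have h2 : ContDiff ℝ (⊤ : ℕ∞) (fderiv ℝ ψ) := hψ.fderiv_right (by simp)
  funext x
  have hdiff : ∀ y, HasFDerivAt ψ (fderiv ℝ ψ y) y := fun y =>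
    ((hψ.differentiable (by simp)) y).hasFDerivAt
  have hdiff2 : HasFDerivAt (fderiv ℝ ψ) (fderiv ℝ (fderiv ℝ ψ) x) x :=
    ((h2.differentiable (by simp)) x).hasFDerivAt
  have hsymm := second_derivative_symmetric hdiff hdiff2 (Pi.single a 1) (Pi.single b 1)
  have key : ∀ v u : EdgeIdx n → ℝ,
      fderiv ℝ (fun y => fderiv ℝ ψ y v) x u = fderiv ℝ (fderiv ℝ ψ) x u v := by
    intro v u
    have hc : DifferentiableAt ℝ (fderiv ℝ ψ) x := (h2.differentiable (by simp)) x
    rw [fderiv_clm_apply hc (differentiableAt_const v)]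
    simp
  show fderiv ℝ (fun y => fderiv ℝ ψ y (Pi.single b 1)) x (Pi.single a 1)
      = fderiv ℝ (fun y => fderiv ℝ ψ y (Pi.single a 1)) x (Pi.single b 1)
  rw [key, key]
  exact hsymm

lemma foldr_perm {φ : (EdgeIdx n → ℝ) → ℝ} (hφ : ContDiff ℝ (⊤ : ℕ∞) φ)
    {l1 l2 : List (EdgeIdx n)} (h : l1.Perm l2) :
    l1.foldr (pderivE n) φ = l2.foldr (pderivE n) φ := by
  induction h with
  | nil => rfl
  | cons a h ih => simpa using congrArg (pderivE n a) ih
  | swap a b l => exact pderivE_comm (contDiff_foldr hφ l) b a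
  | trans h1 h2 ih1 ih2 => exact ih1.trans ih2

lemma mixedDeriv_Fplus {φ : (EdgeIdx n → ℝ) → ℝ} (hφ : ContDiff ℝ (⊤ : ℕ∞) φ)
    {F : SimpleGraph (Fin n)} {q : EdgeIdx n} (hq : q ∉ edgesOf n F) :
    mixedDeriv n (Fplus F q) φ = pderivE n q (mixedDeriv n F φ) := by
  unfold mixedDeriv
  rw [edgesOf_Fplus]
  exact foldr_perm hφ (Finset.toList_insert hq)

/-! ### derivative of the interpolation -/

lemma chi_eq_sum (F : SimpleGraph (Fin n)) :
    chi F = ∑ q ∈ Qd F, Pi.single q (1:ℝ) := by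
  funext p
  rw [Finset.sum_apply]
  by_cases h : qConn F p
  · simp [chi, h, Pi.single_apply, Finset.sum_ite_eq, Qd]
  · simp [chi, h, Pi.single_apply, Finset.sum_ite_eq, Qd]

lemma hasDerivAt_W {ψ : (EdgeIdx n → ℝ) → ℝ} (hψ : ContDiff ℝ (⊤ : ℕ∞) ψ)
    (F : SimpleGraph (Fin n)) (t : EdgeIdx n → ℝ) (s : ℝ) :
    HasDerivAt (fun s' => ψ (W F t s')) (∑ q ∈ Qd F, pderivE n q ψ (W F t s)) s := by
  have hW : ∀ s' : ℝ, W F t s' = vF n F t + s' • chi F := by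
    intro s'; funext p; simp [W, mul_comm]
  have hline : HasDerivAt (fun s' : ℝ => vF n F t + s' • chi F) (chi F) s := by
    simpa using ((hasDerivAt_id s).smul_const (chi F)).const_add (vF n F t)
  have hψd : HasFDerivAt ψ (fderiv ℝ ψ (vF n F t + s • chi F)) (vF n F t + s • chi F) :=
    ((hψ.differentiable (by simp)) _).hasFDerivAt
  have hsum : fderiv ℝ ψ (W F t s) (chi F) = ∑ q ∈ Qd F, pderivE n q ψ (W F t s) := by
    rw [chi_eq_sum, map_sum]; rfl
  have hfun : (fun s' => ψ (W F t s')) = fun s' => ψ (vF n F t + s' • chi F) :=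
    funext fun s' => by rw [hW]
  rw [hfun, ← hsum, hW s]
  exact hψd.comp_hasDerivAt s hline

/-! ### continuity -/

lemma continuous_minL_map {α : Type*} (l : List α) (f : α → (EdgeIdx n → ℝ) → ℝ)
    (hf : ∀ a ∈ l, Continuous (f a)) :
    Continuous (fun t => minL (l.map (fun a => f a t))) := by
  induction l with
  | nil => simpa using continuous_const
  | cons a l ih =>
    simp only [List.map_cons, minL_cons]
    exact (hf a (List.mem_cons_self)).min (ih fun b hb => hf b (List.mem_cons_of_mem _ hb))

lemma continuous_extEdge_apply (e : Sym2 (Fin n)) :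
    Continuous fun t : EdgeIdx n → ℝ => extEdge n t e := by
  unfold extEdge
  by_cases h : e.IsDiag
  · simp only [dif_pos h]; exact continuous_const
  · simp only [dif_neg h]; exact continuous_apply _

lemma continuous_vF {F : SimpleGraph (Fin n)} (hF : F.IsAcyclic) (p : EdgeIdx n) :
    Continuous fun t => vF n F t p := by
  obtain ⟨a, b, hpab, hab⟩ := exists_rep p
  by_cases h : F.Reachable a b
  · obtain ⟨w0⟩ := h
    obtain ⟨w, hwp⟩ := w0.toPath
    have hfun : (fun t => vF n F t p) = fun t => minL (w.edges.map (extEdge n t)) :=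
      funext fun t => vF_eq_path hF hpab w hwp t
    rw [hfun]
    exact continuous_minL_map w.edges (fun e t => extEdge n t e)
      (fun e _ => continuous_extEdge_apply e)
  · have hfun : (fun t => vF n F t p) = fun _ => (0:ℝ) :=
      funext fun t => vF_eq_zero hpab h t
    rw [hfun]; exact continuous_const

lemma continuous_mE (F : SimpleGraph (Fin n)) : Continuous fun t => mE F t :=
  continuous_minL_map (edgesOf n F).toList (fun e t => t e) (fun e _ => continuous_apply e)

/-! ### pointwise FTC identity -/

noncomputable def HH (φ : (EdgeIdx n → ℝ) → ℝ) (F' : SimpleGraph (Fin n)) (q : EdgeIdx n) :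
    (EdgeIdx n → ℝ) → ℝ :=
  fun u => if u q ≤ mE (Fminus F' q) u then mixedDeriv n F' φ (W F' u (u q)) else 0

lemma ftc_pointwise {φ : (EdgeIdx n → ℝ) → ℝ} (hφ : ContDiff ℝ (⊤ : ℕ∞) φ)
    {F : SimpleGraph (Fin n)} (hF : F.IsAcyclic) {t : EdgeIdx n → ℝ} (ht : t ∈ S n) :
    mixedDeriv n F φ (vF n F t)
      = mixedDeriv n F φ (W F t (mE F t))
        - ∫ s in Set.Icc (0:ℝ) 1, ∑ q ∈ Qd F, HH φ (Fplus F q) q (update t q s) := by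
  have hψ : ContDiff ℝ (⊤ : ℕ∞) (mixedDeriv n F φ) := contDiff_mixedDeriv hφ F
  set m := mE F t with hm
  have hm0 : 0 ≤ m := le_mE zero_le_one (fun e _ => (mem_S_iff.1 ht e).1)
  have hm1 : m ≤ 1 := mE_le_one F t
  set g' : ℝ → ℝ := fun s => ∑ q ∈ Qd F, pderivE n q (mixedDeriv n F φ) (W F t s) with hg'
  have hWc : Continuous fun s : ℝ => W F t s := by
    refine continuous_pi fun p => ?_
    exact continuous_const.add (continuous_id.mul continuous_const)
  have hg'c : Continuous g' := by
    refine continuous_finset_sum _ fun q _ => ?_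
    exact ((contDiff_pderivE q hψ).continuous).comp hWc
  have hftc : ∫ s in (0:ℝ)..m, g' s
      = mixedDeriv n F φ (W F t m) - mixedDeriv n F φ (W F t 0) := by
    refine intervalIntegral.integral_eq_sub_of_hasDerivAt
      (fun s _ => hasDerivAt_W hψ F t s) (hg'c.intervalIntegrable _ _)
  have hIoc : ∫ s in (0:ℝ)..m, g' s = ∫ s in Set.Icc (0:ℝ) m, g' s := by
    rw [intervalIntegral.integral_of_le hm0, integral_Icc_eq_integral_Ioc]
  have hIcc : Set.Icc (0:ℝ) 1 ∩ Set.Iic m = Set.Icc (0:ℝ) m := by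
    ext s
    simp only [Set.mem_inter_iff, Set.mem_Icc, Set.mem_Iic]
    constructor
    · rintro ⟨⟨h1, -⟩, h3⟩; exact ⟨h1, h3⟩
    · rintro ⟨h1, h2⟩; exact ⟨⟨h1, h2.trans hm1⟩, h2⟩
  have hind : ∫ s in Set.Icc (0:ℝ) m, g' s
      = ∫ s in Set.Icc (0:ℝ) 1, (Set.Iic m).indicator g' s := by
    rw [setIntegral_indicator measurableSet_Iic, hIcc]
  have hcongr : ∀ s ∈ Set.Icc (0:ℝ) 1,
      (Set.Iic m).indicator g' s = ∑ q ∈ Qd F, HH φ (Fplus F q) q (update t q s) := by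
    intro s hs
    have hnotmem : ∀ q ∈ Qd F, q ∉ edgesOf n F := fun q hq =>
      not_mem_edgesOf_of_not_qConn (Finset.mem_filter.1 hq).2
    have hcond : ∀ q ∈ Qd F, mE (Fminus (Fplus F q) q) (update t q s) = m := by
      intro q hq
      rw [Fminus_Fplus (hnotmem q hq), mE_update (hnotmem q hq)]
    by_cases hsm : s ≤ m
    · rw [Set.indicator_of_mem (Set.mem_Iic.2 hsm)]
      refine Finset.sum_congr rfl fun q hq => ?_
      have hnc : ¬ qConn F q := (Finset.mem_filter.1 hq).2
      have hupd : W (Fplus F q) (update t q s) s = W F t s :=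
        W_update hF hnc hs.2 (fun e he => hsm.trans (mE_le F t he))
      have : HH φ (Fplus F q) q (update t q s)
          = mixedDeriv n (Fplus F q) φ (W (Fplus F q) (update t q s) s) := by
        rw [HH]
        rw [if_pos]
        · rw [Function.update_self]
        · rw [Function.update_self, hcond q hq]; exact hsm
      rw [this, hupd, mixedDeriv_Fplus hφ (hnotmem q hq)]
    · rw [Set.indicator_of_notMem (fun hmem => hsm (Set.mem_Iic.1 hmem))]
      refine (Finset.sum_eq_zero fun q hq => ?_).symm
      rw [HH, if_neg]
      rw [Function.update_self, hcond q hq]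
      exact hsm
  have hint : ∫ s in Set.Icc (0:ℝ) 1, (Set.Iic m).indicator g' s
      = ∫ s in Set.Icc (0:ℝ) 1, ∑ q ∈ Qd F, HH φ (Fplus F q) q (update t q s) :=
    setIntegral_congr_fun measurableSet_Icc hcongr
  have hW0 : mixedDeriv n F φ (W F t 0) = mixedDeriv n F φ (vF n F t) := by rw [W_zero]
  have := hftc.symm
  rw [hIoc, hind, hint] at this
  linarith [this, hW0]


/-! ### measure-theoretic infrastructure -/

open MeasureTheory

instance uniqueEq (q : EdgeIdx n) : Unique {e : EdgeIdx n // e = q} :=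
  ⟨⟨⟨q, rfl⟩⟩, by rintro ⟨x, rfl⟩; rfl⟩

noncomputable def Phi (q : EdgeIdx n) :
    (EdgeIdx n → ℝ) ≃ᵐ ℝ × ({e : EdgeIdx n // ¬ e = q} → ℝ) :=
  (MeasurableEquiv.piEquivPiSubtypeProd (fun _ : EdgeIdx n => ℝ) (fun e => e = q)).trans
    ((MeasurableEquiv.funUnique {e : EdgeIdx n // e = q} ℝ).prodCongr (MeasurableEquiv.refl _))

lemma Phi_apply (q : EdgeIdx n) (t : EdgeIdx n → ℝ) :
    Phi q t = (t q, fun e => t e.1) := rfl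

lemma measurePreserving_Phi (q : EdgeIdx n) :
    MeasurePreserving (Phi q) volume volume := by
  have h1 := MeasureTheory.volume_preserving_piEquivPiSubtypeProd
    (fun _ : EdgeIdx n => ℝ) (fun e => e = q)
  rw [show (Subtype.fintype fun e : EdgeIdx n => e = q) = Fintype.subtypeEq q from
    Subsingleton.elim _ _] at h1
  have h2 : MeasurePreserving
      (⇑((MeasurableEquiv.funUnique {e : EdgeIdx n // e = q} ℝ).prodCongr
        (MeasurableEquiv.refl ({e : EdgeIdx n // ¬ e = q} → ℝ))))
      volume volume := by
    have hco : ⇑((MeasurableEquiv.funUnique {e : EdgeIdx n // e = q} ℝ).prodCongr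
        (MeasurableEquiv.refl ({e : EdgeIdx n // ¬ e = q} → ℝ)))
        = Prod.map (⇑(MeasurableEquiv.funUnique {e : EdgeIdx n // e = q} ℝ))
          (id : ({e : EdgeIdx n // ¬ e = q} → ℝ) → ({e : EdgeIdx n // ¬ e = q} → ℝ)) := rfl
    rw [hco, Measure.volume_eq_prod, Measure.volume_eq_prod]
    exact (MeasureTheory.measurePreserving_funUnique (volume : Measure ℝ)
        {e : EdgeIdx n // e = q}).prod
      (MeasurePreserving.id (volume : Measure ({e : EdgeIdx n // ¬ e = q} → ℝ)))
  rw [Phi, MeasurableEquiv.coe_trans]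
  exact h2.comp h1

def S' (q : EdgeIdx n) : Set ({e : EdgeIdx n // ¬ e = q} → ℝ) :=
  Set.univ.pi fun _ => Set.Icc (0:ℝ) 1

lemma Phi_preimage (q : EdgeIdx n) :
    Phi q ⁻¹' ((Set.Icc (0:ℝ) 1) ×ˢ S' q) = S n := by
  ext t
  simp only [Set.mem_preimage, Phi_apply, Set.mem_prod, S', mem_S_iff, Set.mem_univ_pi]
  constructor
  · rintro ⟨h1, h2⟩ e
    by_cases he : e = q
    · rw [he]; exact h1
    · exact h2 ⟨e, he⟩
  · intro h
    exact ⟨h q, fun e => h e.1⟩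

lemma Phi_symm_preimage (q : EdgeIdx n) :
    (Phi q).symm ⁻¹' (S n) = (Set.Icc (0:ℝ) 1) ×ˢ S' q := by
  rw [← Phi_preimage q]
  ext z
  simp only [Set.mem_preimage, MeasurableEquiv.apply_symm_apply]

lemma Phi_update (q : EdgeIdx n) (t : EdgeIdx n → ℝ) (s : ℝ) :
    Phi q (update t q s) = (s, fun e => t e.1) := by
  rw [Phi_apply]
  refine Prod.ext (Function.update_self _ _ _) ?_
  funext e
  exact Function.update_of_ne e.2 _ _

lemma update_eq_Phi_symm (q : EdgeIdx n) (t : EdgeIdx n → ℝ) (s : ℝ) :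
    update t q s = (Phi q).symm (s, fun e : {e : EdgeIdx n // ¬ e = q} => t e.1) := by
  rw [← Phi_update q t s, MeasurableEquiv.symm_apply_apply]

lemma null_tie (q q' : EdgeIdx n) (hne : q' ≠ q) :
    (volume : Measure (EdgeIdx n → ℝ)) {t | t q = t q'} = 0 := by
  set A : Set (ℝ × ({e : EdgeIdx n // ¬ e = q} → ℝ)) :=
    {z | z.1 = z.2 ⟨q', hne⟩} with hA
  have hAm : MeasurableSet A :=
    measurableSet_eq_fun measurable_fst ((measurable_pi_apply _).comp measurable_snd)
  have hpre : {t : EdgeIdx n → ℝ | t q = t q'} = Phi q ⁻¹' A := rfl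
  rw [hpre, (measurePreserving_Phi q).measure_preimage hAm.nullMeasurableSet]
  rw [Measure.volume_eq_prod, Measure.prod_apply_symm hAm]
  have hsec : ∀ y : {e : EdgeIdx n // ¬ e = q} → ℝ,
      ((fun x => (x, y)) ⁻¹' A) = {y ⟨q', hne⟩} := by
    intro y; ext a; simp [hA]
  simp [hsec]

lemma measurableSet_S : MeasurableSet (S n) :=
  MeasurableSet.univ_pi fun _ => measurableSet_Icc

lemma measurableSet_S' (q : EdgeIdx n) : MeasurableSet (S' q) :=
  MeasurableSet.univ_pi fun _ => measurableSet_Icc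

instance : IsProbabilityMeasure ((volume : Measure ℝ).restrict (Set.Icc (0:ℝ) 1)) := by
  constructor
  rw [Measure.restrict_apply_univ, Real.volume_Icc]
  norm_num

/-- Fubini for integrating out a single updated coordinate over the unit cube. -/
lemma integral_update (q : EdgeIdx n) (h : (EdgeIdx n → ℝ) → ℝ)
    (hint : IntegrableOn h (S n)) :
    IntegrableOn (fun t => ∫ s in Set.Icc (0:ℝ) 1, h (update t q s)) (S n)
    ∧ ∫ t in S n, (∫ s in Set.Icc (0:ℝ) 1, h (update t q s)) = ∫ t in S n, h t := by
  set μ1 : Measure ℝ := volume.restrict (Set.Icc (0:ℝ) 1) with hμ1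
  set ν : Measure ({e : EdgeIdx n // ¬ e = q} → ℝ) := volume.restrict (S' q) with hν
  set f : ℝ × ({e : EdgeIdx n // ¬ e = q} → ℝ) → ℝ := h ∘ (Phi q).symm with hf
  have hprodmeas : μ1.prod ν = (volume : Measure (ℝ × _)).restrict
      ((Set.Icc (0:ℝ) 1) ×ˢ S' q) := by
    rw [hμ1, hν, Measure.prod_restrict, ← Measure.volume_eq_prod]
  have hpsymm : MeasurePreserving ((Phi q).symm) (μ1.prod ν) (volume.restrict (S n)) := by
    rw [hprodmeas, ← Phi_symm_preimage q]
    exact ((measurePreserving_Phi q).symm _).restrict_preimage measurableSet_S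
  have hintf : Integrable f (μ1.prod ν) :=
    (hpsymm.integrable_comp_emb (MeasurableEquiv.measurableEmbedding _)).2 hint
  have hF0 : Integrable (fun y => ∫ s, f (s, y) ∂μ1) ν := hintf.integral_prod_right
  -- identify the left integrand
  have hid : ∀ t : EdgeIdx n → ℝ,
      (∫ s in Set.Icc (0:ℝ) 1, h (update t q s))
        = (fun z : ℝ × ({e : EdgeIdx n // ¬ e = q} → ℝ) =>
            ∫ s, f (s, z.2) ∂μ1) (Phi q t) := by
    intro t
    simp only [Phi_apply]
    show _ = ∫ s in Set.Icc (0:ℝ) 1, f (s, fun e : {e : EdgeIdx n // ¬ e = q} => t e.1)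
    refine setIntegral_congr_fun measurableSet_Icc (fun s _ => ?_)
    rw [hf, Function.comp_apply, ← update_eq_Phi_symm]
  have hmpPhi : MeasurePreserving (Phi q) (volume.restrict (S n)) (μ1.prod ν) := by
    rw [hprodmeas, ← Phi_preimage q]
    exact (measurePreserving_Phi q).restrict_preimage
      ((measurableSet_Icc.prod (measurableSet_S' q)))
  have hmap : (μ1.prod ν).map Prod.snd = ν := by
    rw [Measure.map_snd_prod, measure_univ, one_smul]
  have hintF0snd : Integrable
      (fun z : ℝ × ({e : EdgeIdx n // ¬ e = q} → ℝ) => ∫ s, f (s, z.2) ∂μ1)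
      (μ1.prod ν) := by
    exact (integrable_map_measure (g := fun y => ∫ s, f (s, y) ∂μ1)
      (by rw [hmap]; exact hF0.1) measurable_snd.aemeasurable).1 (by rw [hmap]; exact hF0)
  constructor
  · have : (fun t => ∫ s in Set.Icc (0:ℝ) 1, h (update t q s))
        = (fun z : ℝ × ({e : EdgeIdx n // ¬ e = q} → ℝ) =>
            ∫ s, f (s, z.2) ∂μ1) ∘ (Phi q) := funext fun t => hid t
    rw [this]
    exact (hmpPhi.integrable_comp_emb (MeasurableEquiv.measurableEmbedding _)).2 hintF0snd
  · calc ∫ t in S n, (∫ s in Set.Icc (0:ℝ) 1, h (update t q s))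
        = ∫ t in S n, (fun z : ℝ × ({e : EdgeIdx n // ¬ e = q} → ℝ) =>
            ∫ s, f (s, z.2) ∂μ1) ((Phi q) t) :=
          setIntegral_congr_fun measurableSet_S (fun t _ => hid t)
      _ = ∫ z, (∫ s, f (s, z.2) ∂μ1) ∂(μ1.prod ν) :=
          hmpPhi.integral_comp (MeasurableEquiv.measurableEmbedding _)
            (fun z : ℝ × ({e : EdgeIdx n // ¬ e = q} → ℝ) => ∫ s, f (s, z.2) ∂μ1)
      _ = ∫ y, (∫ s, f (s, y) ∂μ1) ∂((μ1.prod ν).map Prod.snd) :=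
          (integral_map measurable_snd.aemeasurable (by rw [hmap]; exact hF0.1)).symm
      _ = ∫ y, (∫ s, f (s, y) ∂μ1) ∂ν := by rw [hmap]
      _ = ∫ z, f z ∂(μ1.prod ν) := (MeasureTheory.integral_prod_symm f hintf).symm
      _ = ∫ t in S n, h t :=
          hpsymm.integral_comp (MeasurableEquiv.measurableEmbedding _) h


/-! ### integrability and the three main identities -/

lemma isCompact_S : IsCompact (S n) := isCompact_univ_pi fun _ => isCompact_Icc

lemma integrableOn_S {f : (EdgeIdx n → ℝ) → ℝ} (hf : Continuous f) :
    IntegrableOn f (S n) :=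
  hf.continuousOn.integrableOn_compact isCompact_S

noncomputable def AInt (φ : (EdgeIdx n → ℝ) → ℝ) (F : SimpleGraph (Fin n)) : ℝ :=
  ∫ t in S n, mixedDeriv n F φ (vF n F t)

noncomputable def BInt (φ : (EdgeIdx n → ℝ) → ℝ) (F : SimpleGraph (Fin n)) : ℝ :=
  ∫ t in S n, mixedDeriv n F φ (W F t (mE F t))

noncomputable def CInt (φ : (EdgeIdx n → ℝ) → ℝ) (F' : SimpleGraph (Fin n))
    (q : EdgeIdx n) : ℝ :=
  ∫ u in S n, HH φ F' q u

lemma cont_B {φ : (EdgeIdx n → ℝ) → ℝ} (hφ : ContDiff ℝ (⊤ : ℕ∞) φ) {F : SimpleGraph (Fin n)}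
    (hF : F.IsAcyclic) : Continuous fun t => mixedDeriv n F φ (W F t (mE F t)) :=
  (contDiff_mixedDeriv hφ F).continuous.comp (continuous_pi fun p =>
    (continuous_vF hF p).add ((continuous_mE F).mul continuous_const))

lemma cont_Hcore {φ : (EdgeIdx n → ℝ) → ℝ} (hφ : ContDiff ℝ (⊤ : ℕ∞) φ) {F' : SimpleGraph (Fin n)}
    (hF' : F'.IsAcyclic) (q : EdgeIdx n) :
    Continuous fun u => mixedDeriv n F' φ (W F' u (u q)) :=
  (contDiff_mixedDeriv hφ F').continuous.comp (continuous_pi fun p =>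
    (continuous_vF hF' p).add ((continuous_apply q).mul continuous_const))

lemma integrableOn_HH {φ : (EdgeIdx n → ℝ) → ℝ} (hφ : ContDiff ℝ (⊤ : ℕ∞) φ)
    {F' : SimpleGraph (Fin n)} (hF' : F'.IsAcyclic) (q : EdgeIdx n) :
    IntegrableOn (HH φ F' q) (S n) := by
  have hset : MeasurableSet {u : EdgeIdx n → ℝ | u q ≤ mE (Fminus F' q) u} :=
    measurableSet_le (measurable_pi_apply q) (continuous_mE _).measurable
  have heq : HH φ F' q = Set.indicator {u : EdgeIdx n → ℝ | u q ≤ mE (Fminus F' q) u}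
      (fun u => mixedDeriv n F' φ (W F' u (u q))) := by
    funext u
    simp only [HH, Set.indicator_apply, Set.mem_setOf_eq]
  rw [heq]
  exact (integrableOn_S (cont_Hcore hφ hF' q)).indicator hset

lemma integrable_HH_slice {φ : (EdgeIdx n → ℝ) → ℝ} (hφ : ContDiff ℝ (⊤ : ℕ∞) φ)
    {F : SimpleGraph (Fin n)} (hF : F.IsAcyclic) {q : EdgeIdx n} (hnc : ¬ qConn F q)
    (t : EdgeIdx n → ℝ) :
    IntegrableOn (fun s : ℝ => HH φ (Fplus F q) q (update t q s)) (Set.Icc (0:ℝ) 1) := by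
  have hqnm := not_mem_edgesOf_of_not_qConn hnc
  have hF' := acyclic_Fplus hF hnc
  have hupd : Continuous fun s : ℝ => update t q s := by
    refine continuous_pi fun e => ?_
    simp only [Function.update_apply]
    split_ifs
    exacts [continuous_id, continuous_const]
  have hWc : Continuous fun s : ℝ => W (Fplus F q) (update t q s) s :=
    continuous_pi fun p => (((continuous_vF hF' p).comp hupd).add
      (continuous_id.mul continuous_const))
  have heq : (fun s : ℝ => HH φ (Fplus F q) q (update t q s))
      = (Set.Iic (mE F t)).indicator
        (fun s => mixedDeriv n (Fplus F q) φ (W (Fplus F q) (update t q s) s)) := by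
    funext s
    simp only [HH, Set.indicator_apply, Set.mem_Iic, Fminus_Fplus hqnm, mE_update hqnm,
      Function.update_self]
  rw [heq]
  exact ((((contDiff_mixedDeriv hφ _).continuous.comp hWc).continuousOn).integrableOn_compact
    isCompact_Icc).indicator measurableSet_Iic

lemma main1 {φ : (EdgeIdx n → ℝ) → ℝ} (hφ : ContDiff ℝ (⊤ : ℕ∞) φ) {F : SimpleGraph (Fin n)}
    (hF : F.IsAcyclic) :
    AInt φ F = BInt φ F - ∑ q ∈ Qd F, CInt φ (Fplus F q) q := by
  have hqnc : ∀ q ∈ Qd F, ¬ qConn F q := fun q hq => (Finset.mem_filter.1 hq).2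
  have hFq : ∀ q ∈ Qd F, (Fplus F q).IsAcyclic := fun q hq => acyclic_Fplus hF (hqnc q hq)
  have hGint : ∀ q ∈ Qd F, IntegrableOn
      (fun t => ∫ s in Set.Icc (0:ℝ) 1, HH φ (Fplus F q) q (update t q s)) (S n) :=
    fun q hq => (integral_update q _ (integrableOn_HH hφ (hFq q hq) q)).1
  have hGval : ∀ q ∈ Qd F,
      (∫ t in S n, ∫ s in Set.Icc (0:ℝ) 1, HH φ (Fplus F q) q (update t q s))
        = CInt φ (Fplus F q) q :=
    fun q hq => (integral_update q _ (integrableOn_HH hφ (hFq q hq) q)).2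
  have hswap : ∀ t ∈ S n, mixedDeriv n F φ (vF n F t)
      = mixedDeriv n F φ (W F t (mE F t))
        - ∑ q ∈ Qd F, ∫ s in Set.Icc (0:ℝ) 1, HH φ (Fplus F q) q (update t q s) := by
    intro t ht
    rw [ftc_pointwise hφ hF ht]
    congr 1
    exact integral_finset_sum _ fun q hq => integrable_HH_slice hφ hF (hqnc q hq) t
  calc AInt φ F
      = ∫ t in S n, (mixedDeriv n F φ (W F t (mE F t))
          - ∑ q ∈ Qd F, ∫ s in Set.Icc (0:ℝ) 1, HH φ (Fplus F q) q (update t q s)) :=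
        setIntegral_congr_fun measurableSet_S hswap
    _ = (∫ t in S n, mixedDeriv n F φ (W F t (mE F t)))
          - ∫ t in S n, ∑ q ∈ Qd F, ∫ s in Set.Icc (0:ℝ) 1,
              HH φ (Fplus F q) q (update t q s) :=
        integral_sub (integrableOn_S (cont_B hφ hF)) (integrable_finset_sum _ hGint)
    _ = BInt φ F - ∑ q ∈ Qd F, ∫ t in S n, ∫ s in Set.Icc (0:ℝ) 1,
          HH φ (Fplus F q) q (update t q s) := by
        rw [integral_finset_sum _ hGint]; rfl
    _ = BInt φ F - ∑ q ∈ Qd F, CInt φ (Fplus F q) q := by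
        rw [Finset.sum_congr rfl hGval]

lemma main3 {φ : (EdgeIdx n → ℝ) → ℝ} (hφ : ContDiff ℝ (⊤ : ℕ∞) φ) {F' : SimpleGraph (Fin n)}
    (hF' : F'.IsAcyclic) (hne : (edgesOf n F').Nonempty) :
    ∑ q ∈ edgesOf n F', CInt φ F' q = BInt φ F' := by
  have hsum : ∑ q ∈ edgesOf n F', CInt φ F' q
      = ∫ u in S n, ∑ q ∈ edgesOf n F', HH φ F' q u :=
    (integral_finset_sum _ fun q _ => integrableOn_HH hφ hF' q).symm
  rw [hsum]
  refine integral_congr_ae ?_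
  have hS : ∀ᵐ t ∂((volume : Measure (EdgeIdx n → ℝ)).restrict (S n)), t ∈ S n :=
    ae_restrict_mem measurableSet_S
  have hties : ∀ᵐ t ∂((volume : Measure (EdgeIdx n → ℝ)).restrict (S n)),
      ∀ q q' : EdgeIdx n, q' ≠ q → t q ≠ t q' := by
    refine ae_all_iff.2 fun q => ae_all_iff.2 fun q' => ?_
    by_cases h : q' = q
    · exact Filter.Eventually.of_forall fun t hh => absurd h hh
    · refine ae_restrict_of_ae ?_
      rw [ae_iff]
      refine measure_mono_null ?_ (null_tie q q' h)
      intro t ht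
      simp only [Set.mem_setOf_eq, _root_.not_imp, not_not] at ht
      exact ht.2
  filter_upwards [hS, hties] with t htS htie
  obtain ⟨q₀, hq₀mem, hq₀min⟩ := Finset.exists_min_image (edgesOf n F') t hne
  have hq01 : t q₀ ≤ 1 := (mem_S_iff.1 htS q₀).2
  have hmE : mE F' t = t q₀ := le_antisymm (mE_le F' t hq₀mem) (le_mE hq01 hq₀min)
  rw [Finset.sum_eq_single_of_mem q₀ hq₀mem ?side]
  case side =>
    intro q hq hqne
    have h1 : mE (Fminus F' q) t ≤ t q₀ := by
      refine mE_le _ t ?_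
      rw [edgesOf_Fminus]
      exact Finset.mem_erase.2 ⟨Ne.symm hqne, hq₀mem⟩
    have h2 : t q₀ < t q :=
      lt_of_le_of_ne (hq₀min q hq) ((htie q q₀ (Ne.symm hqne)).symm)
    simp only [HH]
    rw [if_neg]
    exact fun hc => absurd (hc.trans h1) (not_le.2 h2)
  · simp only [HH]
    rw [if_pos, hmE]
    refine le_mE hq01 fun e he => ?_
    rw [edgesOf_Fminus] at he
    exact hq₀min e (Finset.mem_of_mem_erase he)

lemma edgesOf_bot : edgesOf n (⊥ : SimpleGraph (Fin n)) = ∅ := by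
  ext e; simp [mem_edgesOf]

lemma mixedDeriv_bot (φ : (EdgeIdx n → ℝ) → ℝ) : mixedDeriv n ⊥ φ = φ := by
  unfold mixedDeriv
  rw [edgesOf_bot, Finset.toList_empty]
  rfl

lemma mE_bot (t : EdgeIdx n → ℝ) : mE (⊥ : SimpleGraph (Fin n)) t = 1 := by
  unfold mE
  rw [edgesOf_bot, Finset.toList_empty]
  rfl

lemma W_bot (t : EdgeIdx n → ℝ) : W (⊥ : SimpleGraph (Fin n)) t 1 = fun _ => (1:ℝ) := by
  funext p
  obtain ⟨a, b, hpab, hab⟩ := exists_rep p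
  have hnr : ¬ (⊥ : SimpleGraph (Fin n)).Reachable a b := fun hr => hab (reachable_bot.1 hr)
  show vF n ⊥ t p + 1 * chi ⊥ p = 1
  rw [vF_eq_zero hpab hnr]
  have : chi (⊥ : SimpleGraph (Fin n)) p = 1 :=
    if_neg (fun hcon => hnr ((qConn_iff hpab).1 hcon))
  rw [this]
  norm_num

lemma volume_S : (volume : Measure (EdgeIdx n → ℝ)) (S n) = 1 := by
  rw [S, volume_pi_pi]
  simp [Real.volume_Icc]

lemma main4 (φ : (EdgeIdx n → ℝ) → ℝ) : BInt φ (⊥ : SimpleGraph (Fin n)) = φ (fun _ => 1) := by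
  unfold BInt
  have hconst : ∀ t : EdgeIdx n → ℝ,
      mixedDeriv n ⊥ φ (W ⊥ t (mE ⊥ t)) = φ (fun _ => 1) := by
    intro t
    rw [mixedDeriv_bot, mE_bot, W_bot]
  rw [show (fun t : EdgeIdx n → ℝ => mixedDeriv n ⊥ φ (W ⊥ t (mE ⊥ t)))
    = fun _ => φ (fun _ => 1) from funext hconst]
  rw [setIntegral_const, measureReal_def, volume_S]
  simp

lemma edgesOf_nonempty {F : SimpleGraph (Fin n)} (h : F ≠ ⊥) :
    (edgesOf n F).Nonempty := by
  have h2 : F.edgeSet.Nonempty := by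
    rw [Set.nonempty_iff_ne_empty]
    exact fun hh => h (edgeSet_eq_empty.1 hh)
  obtain ⟨e, he⟩ := h2
  exact ⟨⟨e, F.not_isDiag_of_mem_edgeSet he⟩, mem_edgesOf.2 he⟩

noncomputable instance : Fintype {F : SimpleGraph (Fin n) // F.IsAcyclic} :=
  Fintype.ofFinite _

lemma reindex (φ : (EdgeIdx n → ℝ) → ℝ) :
    ∑ F : {F : SimpleGraph (Fin n) // F.IsAcyclic}, ∑ q ∈ Qd F.1, CInt φ (Fplus F.1 q) q
      = ∑ F' : {F : SimpleGraph (Fin n) // F.IsAcyclic},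
          ∑ q ∈ edgesOf n F'.1, CInt φ F'.1 q := by
  rw [Finset.sum_sigma', Finset.sum_sigma']
  refine Finset.sum_bij'
    (i := fun x hx => ⟨⟨Fplus x.1.1 x.2, acyclic_Fplus x.1.2
      (Finset.mem_filter.1 (Finset.mem_sigma.1 hx).2).2⟩, x.2⟩)
    (j := fun x hx => ⟨⟨Fminus x.1.1 x.2, acyclic_of_le (deleteEdges_le _) x.1.2⟩, x.2⟩)
    ?_ ?_ ?_ ?_ ?_
  · rintro ⟨F, q⟩ hx
    refine Finset.mem_sigma.2 ⟨Finset.mem_univ _, ?_⟩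
    rw [edgesOf_Fplus]
    exact Finset.mem_insert_self _ _
  · rintro ⟨F', q⟩ hx
    refine Finset.mem_sigma.2 ⟨Finset.mem_univ _, ?_⟩
    refine Finset.mem_filter.2 ⟨Finset.mem_univ _, ?_⟩
    exact not_qConn_Fminus F'.2 (Finset.mem_sigma.1 hx).2
  · rintro ⟨F, q⟩ hx
    have h1 : Fminus (Fplus F.1 q) q = F.1 :=
      Fminus_Fplus (not_mem_edgesOf_of_not_qConn
        (Finset.mem_filter.1 (Finset.mem_sigma.1 hx).2).2)
    have : (⟨Fminus (Fplus F.1 q) q, acyclic_of_le (deleteEdges_le _)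
        (acyclic_Fplus F.2 (Finset.mem_filter.1 (Finset.mem_sigma.1 hx).2).2)⟩
        : {F : SimpleGraph (Fin n) // F.IsAcyclic}) = F := Subtype.ext h1
    simp only [this]
  · rintro ⟨F', q⟩ hx
    have h1 : Fplus (Fminus F'.1 q) q = F'.1 :=
      Fplus_Fminus (Finset.mem_sigma.1 hx).2
    have : (⟨Fplus (Fminus F'.1 q) q, acyclic_Fplus
        (acyclic_of_le (deleteEdges_le _) F'.2)
        (not_qConn_Fminus F'.2 (Finset.mem_sigma.1 hx).2)⟩
        : {F : SimpleGraph (Fin n) // F.IsAcyclic}) = F' := Subtype.ext h1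
    simp only [this]
  · rintro ⟨F, q⟩ hx
    rfl

end BKARaux

open BKAR in
/-- **The Brydges–Kennedy–Abdesselam–Rivasseau forest formula.**
For any smooth `φ : ℝ^P → ℝ`, where `P` is the set of unordered pairs of distinct
elements of `{1,…,n}`,
`φ(1,…,1) = Σ_F ∫_{[0,1]^{E(F)}} (∂^{|E(F)|}φ/∏_{e∈E(F)}∂x_e)(v^F(t)) ∏_e dt_e`,
the sum running over all forests `F` on `{1,…,n}`.  (Since the integrand depends only on
the coordinates `t_e`, `e ∈ E(F)`, and the cube has volume one, the integral is
equivalently written over the whole cube `[0,1]^P`.) -/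
theorem BKAR_forest_formula (n : ℕ) (hn : 1 ≤ n)
    (φ : (EdgeIdx n → ℝ) → ℝ) (hφ : ContDiff ℝ (⊤ : ℕ∞) φ) :
    φ (fun _ => 1) =
      ∑ᶠ F : {F : SimpleGraph (Fin n) // F.IsAcyclic},
        ∫ t in Set.univ.pi (fun _ : EdgeIdx n => Set.Icc (0:ℝ) 1),
          mixedDeriv n F.1 φ (vF n F.1 t) := by
  classical
  rw [finsum_eq_sum_of_fintype]
  have hstep : ∀ F : {F : SimpleGraph (Fin n) // F.IsAcyclic},
      (∫ t in Set.univ.pi (fun _ : EdgeIdx n => Set.Icc (0:ℝ) 1),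
        mixedDeriv n F.1 φ (vF n F.1 t))
      = BKARaux.BInt φ F.1 - ∑ q ∈ BKARaux.Qd F.1,
          BKARaux.CInt φ (BKARaux.Fplus F.1 q) q := fun F => BKARaux.main1 hφ F.2
  rw [Finset.sum_congr rfl fun F _ => hstep F, Finset.sum_sub_distrib,
    BKARaux.reindex φ, ← Finset.sum_sub_distrib]
  have hkey : ∀ F' : {F : SimpleGraph (Fin n) // F.IsAcyclic},
      BKARaux.BInt φ F'.1 - ∑ q ∈ BKAR.edgesOf n F'.1, BKARaux.CInt φ F'.1 q
        = if F' = ⟨⊥, SimpleGraph.isAcyclic_bot⟩ then φ (fun _ => 1) else 0 := by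
    intro F'
    by_cases h : F' = ⟨⊥, SimpleGraph.isAcyclic_bot⟩
    · rw [if_pos h, h]
      simp only
      rw [BKARaux.edgesOf_bot, Finset.sum_empty, sub_zero, BKARaux.main4]
    · rw [if_neg h]
      have hne : F'.1 ≠ ⊥ := fun hh => h (Subtype.ext hh)
      rw [BKARaux.main3 hφ F'.2 (BKARaux.edgesOf_nonempty hne), sub_self]
  rw [Finset.sum_congr rfl fun F' _ => hkey F']
  rw [Finset.sum_eq_single_of_mem (⟨⊥, SimpleGraph.isAcyclic_bot⟩ :
      {F : SimpleGraph (Fin n) // F.IsAcyclic}) (Finset.mem_univ _)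
    (fun b _ hb => if_neg hb)]
  rw [if_pos rfl]
end

section
/- Let k ≥ 1 and N ≥ k, and suppose Wg : S_k → ℂ satisfies the Weingarten relation: for all index tuples a, b, c, d ∈ {1,…,N}^k, ∫_{U(N)} U_{a₁b₁}⋯U_{a_k b_k} · conj(U_{c₁d₁})⋯conj(U_{c_k d_k}) dU = Σ_{σ,τ ∈ S_k} ( ∏_{i=1}^{k} δ_{a_{τ(i)}, c_i} δ_{b_{σ(i)}, d_i} ) Wg(τσ⁻¹), where the integral is with respect to the Haar probability measure on the unitary group U(N). Then for all ρ, σ ∈ S_k: Σ_{τ ∈ S_k} N^{c(τρ⁻¹)} Wg(τσ⁻¹) = 1 if ρ = σ, and = 0 otherwise, where c(π) denotes the number of cycles of the permutation π. -/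
open MeasureTheory

/-- The product σ-algebra on matrices (entrywise). -/
instance matrixMeasurableSpace {m n α : Type*} [MeasurableSpace α] :
    MeasurableSpace (Matrix m n α) :=
  inferInstanceAs (MeasurableSpace (m → n → α))

/-!
Apply the Weingarten relation with column indices `b = ι`, `d = ι ∘ σ` for an injection
`ι : Fin k → Fin N` (this is where `k ≤ N` enters), so that only the term `σ' = σ` survives,
and with row indices `c = a ∘ ρ`; then sum over all `a`. On the right-hand side,
`∑_a ∏_i δ(a (τ i), a (ρ i))` counts the colourings of `Fin k` with `N` colours that are
constant on the cycles of `τ ρ⁻¹`, which is `N ^ c(τ ρ⁻¹)`. On the left-hand side the sum over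
`a` factorises into `∏_i (U* U)_{ι (σ i), ι (ρ i)} = δ_{ρ σ}` for every unitary `U`, so its
integral against the probability measure is `δ_{ρ σ}`.
-/
namespace Equiv.Perm

variable {α β : Type*}

theorem sameCycleSetoid_le_ker_iff [Finite α] {π : Perm α} {f : α → β} :
    π.sameCycleSetoid ≤ Setoid.ker f ↔ ∀ x, f (π x) = f x := by
  refine ⟨fun h x => (h (sameCycle_apply_right.2 (SameCycle.refl π x))).symm,
    fun h x y hxy => ?_⟩
  obtain ⟨n, rfl⟩ := hxy.exists_nat_pow_eq
  have hsemiconj : Function.Semiconj f π id := h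
  simpa [coe_pow] using (hsemiconj.iterate_right n x).symm

theorem card_invariant_functions [Finite α] [Finite β] (π : Perm α) :
    Nat.card {f : α → β // ∀ x, f (π x) = f x} = Nat.card β ^ π.cycleCount := by
  rw [Nat.card_congr ((Equiv.subtypeEquivRight fun f => sameCycleSetoid_le_ker_iff.symm).trans
    (Setoid.liftEquiv π.sameCycleSetoid)), Nat.card_fun, cycleCount]

theorem sum_prod_ite_apply_eq_apply {R : Type*} [CommSemiring R] [Fintype α] [DecidableEq α]
    [Fintype β] [DecidableEq β] (τ ρ : Perm α) :
    ∑ f : α → β, ∏ x, (if f (τ x) = f (ρ x) then (1 : R) else 0) =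
      (Fintype.card β : R) ^ (τ * ρ⁻¹).cycleCount := by
  have hiff (f : α → β) : (∀ x, f (τ x) = f (ρ x)) ↔ ∀ y, f ((τ * ρ⁻¹) y) = f y :=
    ρ⁻¹.forall_congr_right.symm.trans <| by simp
  simp_rw [Fintype.prod_boole, hiff, Finset.sum_boole, ← Fintype.card_subtype,
    ← Nat.card_eq_fintype_card, card_invariant_functions, Nat.cast_pow]

theorem prod_ite_apply_eq_apply_of_injective {R : Type*} [CommMonoidWithZero R] [Fintype α]
    [DecidableEq α] [DecidableEq β] {ι : α → β} (hι : ι.Injective) (σ τ : Perm α) :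
    ∏ x, (if ι (σ x) = ι (τ x) then (1 : R) else 0) = if σ = τ then 1 else 0 := by
  simp only [Fintype.prod_boole, hι.eq_iff, ← Perm.ext_iff]

end Equiv.Perm

namespace Matrix

variable {n κ : Type*} [Fintype n] [DecidableEq n] [Fintype κ]

theorem sum_mul_star_of_mem_unitaryGroup {R : Type*} [CommRing R] [StarRing R]
    {U : Matrix n n R} (hU : U ∈ unitaryGroup n R) (i j : n) :
    ∑ m, U m i * star (U m j) = if j = i then 1 else 0 := by
  simpa [mul_apply, one_apply, mul_comm] using congr_fun₂ (mem_unitaryGroup_iff'.mp hU) j i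

theorem sum_prod_mul_prod_star_of_mem_unitaryGroup {R : Type*} [CommRing R] [StarRing R]
    [DecidableEq κ] {U : Matrix n n R} (hU : U ∈ unitaryGroup n R) (x y : κ → n)
    (ρ : Equiv.Perm κ) :
    ∑ a : κ → n, (∏ j, U (a j) (x j)) * ∏ j, star (U (a (ρ j)) (y j)) =
      ∏ j, if y j = x (ρ j) then 1 else 0 := by
  have hreindex (a : κ → n) :
      ∏ j, star (U (a (ρ j)) (y j)) = ∏ j, star (U (a j) (y (ρ⁻¹ j))) := by
    rw [← Equiv.prod_comp ρ fun j => star (U (a j) (y (ρ⁻¹ j)))]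
    simp
  simp_rw [hreindex, ← Finset.prod_mul_distrib]
  rw [← Fintype.prod_sum fun j m => U m (x j) * star (U m (y (ρ⁻¹ j))),
    ← Equiv.prod_comp ρ]
  simp [sum_mul_star_of_mem_unitaryGroup hU]

theorem integrable_prod_entry_mul_prod_conj_entry (μ : Measure (unitaryGroup n ℂ))
    [IsFiniteMeasure μ] (a b c d : κ → n) :
    Integrable (fun u : unitaryGroup n ℂ =>
      (∏ i, (u : Matrix n n ℂ) (a i) (b i)) *
        ∏ i, starRingEnd ℂ ((u : Matrix n n ℂ) (c i) (d i))) μ := by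
  have hentry : ∀ i j, Measurable fun u : unitaryGroup n ℂ => (u : Matrix n n ℂ) i j :=
    fun i j => (measurable_pi_apply j).comp ((measurable_pi_apply i).comp measurable_subtype_coe)
  refine Integrable.of_bound (Measurable.aestronglyMeasurable ?_) 1 (ae_of_all _ fun u => ?_)
  · exact (Finset.measurable_prod _ fun i _ => hentry _ _).mul
      (Finset.measurable_prod _ fun i _ => Complex.continuous_conj.measurable.comp (hentry _ _))
  have hu : ∀ i j, ‖(u : Matrix n n ℂ) i j‖ ≤ 1 := entry_norm_bound_of_unitary u.2
  simp only [norm_mul, norm_prod, Complex.norm_conj]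
  exact mul_le_one₀ (Finset.prod_le_one (fun _ _ => norm_nonneg _) fun _ _ => hu _ _)
    (Finset.prod_nonneg fun _ _ => norm_nonneg _)
    (Finset.prod_le_one (fun _ _ => norm_nonneg _) fun _ _ => hu _ _)

end Matrix

theorem weingarten_convolution_inverse_general (k N : ℕ) (hkN : k ≤ N)
    (μ : Measure (Matrix.unitaryGroup (Fin N) ℂ)) [IsProbabilityMeasure μ]
    (Wg : Equiv.Perm (Fin k) → ℂ)
    (hWg : ∀ a b c d : Fin k → Fin N,
      (∫ u : Matrix.unitaryGroup (Fin N) ℂ,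
          (∏ i, (u : Matrix (Fin N) (Fin N) ℂ) (a i) (b i)) *
            ∏ i, starRingEnd ℂ ((u : Matrix (Fin N) (Fin N) ℂ) (c i) (d i)) ∂μ) =
        ∑ σ : Equiv.Perm (Fin k), ∑ τ : Equiv.Perm (Fin k),
          (∏ i, (if a (τ i) = c i then (1:ℂ) else 0) *
              (if b (σ i) = d i then (1:ℂ) else 0)) * Wg (τ * σ⁻¹)) :
    ∀ ρ σ : Equiv.Perm (Fin k),
      (∑ τ : Equiv.Perm (Fin k),
          (N : ℂ) ^ (τ * ρ⁻¹).cycleCount * Wg (τ * σ⁻¹)) =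
        if ρ = σ then 1 else 0 := by
  intro ρ σ
  set ι : Fin k → Fin N := Fin.castLE hkN
  have hι : ι.Injective := Fin.castLE_injective hkN
  set F : (Fin k → Fin N) → Matrix.unitaryGroup (Fin N) ℂ → ℂ := fun a u =>
    (∏ i, (u : Matrix (Fin N) (Fin N) ℂ) (a i) (ι i)) *
      ∏ i, starRingEnd ℂ ((u : Matrix (Fin N) (Fin N) ℂ) (a (ρ i)) (ι (σ i)))
  have hrel (a : Fin k → Fin N) : ∫ u, F a u ∂μ =
      ∑ τ, (∏ i, if a (τ i) = a (ρ i) then (1 : ℂ) else 0) * Wg (τ * σ⁻¹) := by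
    rw [hWg]
    simp only [Finset.prod_mul_distrib, Equiv.Perm.prod_ite_apply_eq_apply_of_injective hι]
    simp [Finset.sum_ite_irrel]
  have hortho (u : Matrix.unitaryGroup (Fin N) ℂ) : ∑ a, F a u = if ρ = σ then 1 else 0 := by
    simpa [F, Equiv.Perm.prod_ite_apply_eq_apply_of_injective hι, eq_comm] using
      Matrix.sum_prod_mul_prod_star_of_mem_unitaryGroup u.2 ι (ι ∘ σ) ρ
  calc ∑ τ, (N : ℂ) ^ (τ * ρ⁻¹).cycleCount * Wg (τ * σ⁻¹)
      = ∑ a : Fin k → Fin N, ∑ τ,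
          (∏ i, if a (τ i) = a (ρ i) then (1 : ℂ) else 0) * Wg (τ * σ⁻¹) := by
        rw [Finset.sum_comm]
        simp_rw [← Finset.sum_mul, Equiv.Perm.sum_prod_ite_apply_eq_apply, Fintype.card_fin]
    _ = ∑ a, ∫ u, F a u ∂μ := by simp_rw [hrel]
    _ = ∫ u, ∑ a, F a u ∂μ :=
        (integral_finsetSum _ fun _ _ =>
          Matrix.integrable_prod_entry_mul_prod_conj_entry μ _ _ _ _).symm
    _ = if ρ = σ then 1 else 0 := by
        rw [integral_congr_ae (ae_of_all _ hortho)]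
        simp

/-- **Convolution inverse property of the Weingarten functions** (Lemma
"Convolution inverse").  Let `μ` be the Haar probability measure on `U(N)` (a
left-invariant probability measure) and suppose `Wg : S_k → ℂ` satisfies the Weingarten
relation for moments of Haar-distributed unitaries.  Then for `N ≥ k` and all
`ρ, σ ∈ S_k`, `Σ_{τ ∈ S_k} N^{c(τρ⁻¹)} Wg(τσ⁻¹) = δ_{ρσ}`, where `c` is the number of
cycles. -/
theorem weingarten_convolution_inverse (k N : ℕ) (hk : 1 ≤ k) (hkN : k ≤ N)
    (μ : Measure (Matrix.unitaryGroup (Fin N) ℂ)) [IsProbabilityMeasure μ]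
    (hinv : ∀ g : Matrix.unitaryGroup (Fin N) ℂ, μ.map (fun u => g * u) = μ)
    (Wg : Equiv.Perm (Fin k) → ℂ)
    (hWg : ∀ a b c d : Fin k → Fin N,
      (∫ u : Matrix.unitaryGroup (Fin N) ℂ,
          (∏ i, (u : Matrix (Fin N) (Fin N) ℂ) (a i) (b i)) *
            ∏ i, starRingEnd ℂ ((u : Matrix (Fin N) (Fin N) ℂ) (c i) (d i)) ∂μ) =
        ∑ σ : Equiv.Perm (Fin k), ∑ τ : Equiv.Perm (Fin k),
          (∏ i, (if a (τ i) = c i then (1:ℂ) else 0) *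
              (if b (σ i) = d i then (1:ℂ) else 0)) * Wg (τ * σ⁻¹)) :
    ∀ ρ σ : Equiv.Perm (Fin k),
      (∑ τ : Equiv.Perm (Fin k),
          (N : ℂ) ^ (τ * ρ⁻¹).cycleCount * Wg (τ * σ⁻¹)) =
        if ρ = σ then 1 else 0 :=
  weingarten_convolution_inverse_general k N hkN μ Wg hWg
end

section
/- Let k ≥ 1 and N ≥ 1, and suppose Wg : S_k → ℂ satisfies the Weingarten relation: for all index tuples a, b, c, d ∈ {1,…,N}^k, ∫_{U(N)} U_{a₁b₁}⋯U_{a_k b_k} · conj(U_{c₁d₁})⋯conj(U_{c_k d_k}) dU = Σ_{σ,τ ∈ S_k} ( ∏_{i=1}^{k} δ_{a_{τ(i)}, c_i} δ_{b_{σ(i)}, d_i} ) Wg(τσ⁻¹), where the integral is with respect to the Haar probability measure on U(N). Let A : ({1,…,N}^k) × ({1,…,N}^k) → ℂ be a family of coefficients and define, for an N×N complex matrix H, P(H) = Σ_{p,q ∈ {1,…,N}^k} A(p,q) ∏_{i=1}^{k} H_{p_i q_i}. If H is an N×N complex matrix such that P(UHU†) = P(H) for every U ∈ U(N), then P(H)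 = Σ_{σ,τ ∈ S_k} Wg(τσ⁻¹) · ( Σ_{p ∈ {1,…,N}^k} A(p, p∘τ) ) · ( Σ_{a ∈ {1,…,N}^k} ∏_{i=1}^{k} H_{a_i, a_{σ(i)}} ), where p∘τ denotes the tuple whose i-th entry is p_{τ(i)}. -/
open MeasureTheory
open scoped Matrix

section Algebra

variable {ι n R : Type*} [Fintype ι] [DecidableEq ι] [Fintype n] [CommSemiring R]

theorem prod_mul_mul_conjTranspose_apply [StarRing R] (U H : Matrix n n R)
    (p q : ι → n) :
    ∏ i, (U * H * Uᴴ) (p i) (q i) =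
      ∑ a : ι → n, ∑ b : ι → n, (∏ i, H (a i) (b i)) *
        ((∏ i, U (p i) (a i)) * ∏ i, star (U (q i) (b i))) := by
  have hentry : ∀ r c, (U * H * Uᴴ) r c = ∑ x, ∑ y, U r x * H x y * star (U c y) := by
    intro r c
    simp only [Matrix.mul_apply, Matrix.conjTranspose_apply, Finset.sum_mul]
    exact Finset.sum_comm
  simp only [hentry, Fintype.prod_sum, Finset.prod_mul_distrib]
  exact Finset.sum_congr rfl fun a _ => Finset.sum_congr rfl fun b _ => by ring

theorem sum_mul_prod_ite_eq [DecidableEq n] (r : ι → n) (f : (ι → n) → R) :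
    ∑ q, f q * ∏ i, (if r i = q i then 1 else 0) = f r := by
  simp [Fintype.prod_boole, ← funext_iff]

theorem sum_mul_weingarten_sum_eq [DecidableEq n] (A : (ι → n) → (ι → n) → R)
    (H : Matrix n n R) (Wg : Equiv.Perm ι → R) :
    ∑ p, ∑ q, ∑ a : ι → n, ∑ b : ι → n, A p q * (∏ i, H (a i) (b i)) *
        ∑ σ : Equiv.Perm ι, ∑ τ : Equiv.Perm ι,
          (∏ i, (if p (τ i) = q i then (1 : R) else 0) * (if a (σ i) = b i then 1 else 0)) *
            Wg (τ * σ⁻¹) =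
      ∑ σ : Equiv.Perm ι, ∑ τ : Equiv.Perm ι,
        Wg (τ * σ⁻¹) * (∑ p, A p (fun i => p (τ i))) * ∑ a : ι → n, ∏ i, H (a i) (a (σ i)) := by
  conv_lhs => simp only [Finset.mul_sum, Finset.prod_mul_distrib,
    Finset.sum_comm (γ := ι → n) (α := Equiv.Perm ι)]
  refine Finset.sum_congr rfl fun σ _ => Finset.sum_congr rfl fun τ _ => ?_
  have hA : ∀ p, A p (fun i => p (τ i)) = ∑ q, A p q * ∏ i, if p (τ i) = q i then 1 else 0 :=
    fun p => (sum_mul_prod_ite_eq (fun i => p (τ i)) (A p)).symm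
  have hH : ∀ a : ι → n, ∏ i, H (a i) (a (σ i)) =
      ∑ b : ι → n, (∏ i, H (a i) (b i)) * ∏ i, if a (σ i) = b i then 1 else 0 :=
    fun a => (sum_mul_prod_ite_eq (fun i => a (σ i)) fun b => ∏ i, H (a i) (b i)).symm
  rw [mul_right_comm]
  simp only [hA, hH, Finset.mul_sum, Finset.sum_mul]
  exact Finset.sum_congr rfl fun p _ => Finset.sum_congr rfl fun q _ =>
    Finset.sum_congr rfl fun a _ => Finset.sum_congr rfl fun b _ => by ring

end Algebra

section UnitaryGroup

variable {ι n : Type*} [Fintype ι] [Fintype n] [DecidableEq n]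

theorem measurable_unitaryGroup_apply (i j : n) :
    Measurable fun u : Matrix.unitaryGroup n ℂ => (u : Matrix n n ℂ) i j :=
  (measurable_pi_apply j).comp ((measurable_pi_apply i).comp measurable_subtype_coe)

theorem integrable_unitaryGroup_monomial (μ : Measure (Matrix.unitaryGroup n ℂ))
    [IsFiniteMeasure μ] (p a q b : ι → n) :
    Integrable (fun u : Matrix.unitaryGroup n ℂ =>
      (∏ i, (u : Matrix n n ℂ) (p i) (a i)) *
        ∏ i, starRingEnd ℂ ((u : Matrix n n ℂ) (q i) (b i))) μ := by
  refine .of_bound ?_ 1 (ae_of_all μ fun u => ?_)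
  · exact ((Finset.measurable_prod _ fun i _ => measurable_unitaryGroup_apply _ _).mul
      (Finset.measurable_prod _ fun i _ =>
        continuous_star.measurable.comp (measurable_unitaryGroup_apply _ _))).aestronglyMeasurable
  · have hle : ∀ r c : ι → n, ∏ i, ‖(u : Matrix n n ℂ) (r i) (c i)‖ ≤ 1 := fun r c =>
      Finset.prod_le_one (fun _ _ => norm_nonneg _) fun i _ => entry_norm_bound_of_unitary u.2 _ _
    simp only [norm_mul, norm_prod, RCLike.norm_conj]
    exact mul_le_one₀ (hle p a) (Finset.prod_nonneg fun _ _ => norm_nonneg _) (hle q b)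

variable [DecidableEq ι]

theorem integral_sum_mul_prod_unitary_conj_apply (μ : Measure (Matrix.unitaryGroup n ℂ))
    [IsFiniteMeasure μ] (A : (ι → n) → (ι → n) → ℂ) (H : Matrix n n ℂ) :
    ∫ u : Matrix.unitaryGroup n ℂ, ∑ p, ∑ q, A p q *
        ∏ i, ((u : Matrix n n ℂ) * H * (u : Matrix n n ℂ)ᴴ) (p i) (q i) ∂μ =
      ∑ p, ∑ q, ∑ a : ι → n, ∑ b : ι → n, A p q * (∏ i, H (a i) (b i)) *
        ∫ u : Matrix.unitaryGroup n ℂ, (∏ i, (u : Matrix n n ℂ) (p i) (a i)) *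
          ∏ i, starRingEnd ℂ ((u : Matrix n n ℂ) (q i) (b i)) ∂μ := by
  have hmono := integrable_unitaryGroup_monomial (ι := ι) μ
  simp only [prod_mul_mul_conjTranspose_apply, Finset.mul_sum, ← starRingEnd_apply]
  simp (disch := intros; fun_prop) only [integral_finsetSum, integral_const_mul, mul_assoc]

end UnitaryGroup

theorem unitary_invariant_poly_trace_invariant_expansion_general (k N : ℕ)
    (μ : Measure (Matrix.unitaryGroup (Fin N) ℂ)) [IsProbabilityMeasure μ]
    (Wg : Equiv.Perm (Fin k) → ℂ)
    (hWg : ∀ a b c d : Fin k → Fin N,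
      (∫ u : Matrix.unitaryGroup (Fin N) ℂ,
          (∏ i, (u : Matrix (Fin N) (Fin N) ℂ) (a i) (b i)) *
            ∏ i, starRingEnd ℂ ((u : Matrix (Fin N) (Fin N) ℂ) (c i) (d i)) ∂μ) =
        ∑ σ : Equiv.Perm (Fin k), ∑ τ : Equiv.Perm (Fin k),
          (∏ i, (if a (τ i) = c i then (1:ℂ) else 0) *
              (if b (σ i) = d i then (1:ℂ) else 0)) * Wg (τ * σ⁻¹))
    (A : (Fin k → Fin N) → (Fin k → Fin N) → ℂ)
    (H : Matrix (Fin N) (Fin N) ℂ)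
    (hinvP : ∀ U : Matrix.unitaryGroup (Fin N) ℂ,
      (∑ p : Fin k → Fin N, ∑ q : Fin k → Fin N, A p q *
          ∏ i, ((U : Matrix (Fin N) (Fin N) ℂ) * H *
            (U : Matrix (Fin N) (Fin N) ℂ)ᴴ) (p i) (q i)) =
        ∑ p : Fin k → Fin N, ∑ q : Fin k → Fin N, A p q * ∏ i, H (p i) (q i)) :
    (∑ p : Fin k → Fin N, ∑ q : Fin k → Fin N, A p q * ∏ i, H (p i) (q i)) =
      ∑ σ : Equiv.Perm (Fin k), ∑ τ : Equiv.Perm (Fin k),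
        Wg (τ * σ⁻¹) * (∑ p : Fin k → Fin N, A p (fun i => p (τ i))) *
          (∑ a : Fin k → Fin N, ∏ i, H (a i) (a (σ i))) := by
  calc (∑ p : Fin k → Fin N, ∑ q : Fin k → Fin N, A p q * ∏ i, H (p i) (q i))
      = ∫ u : Matrix.unitaryGroup (Fin N) ℂ, ∑ p : Fin k → Fin N, ∑ q : Fin k → Fin N, A p q *
          ∏ i, ((u : Matrix (Fin N) (Fin N) ℂ) * H *
            (u : Matrix (Fin N) (Fin N) ℂ)ᴴ) (p i) (q i) ∂μ := by
        simp only [hinvP, integral_const, probReal_univ, one_smul]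
    _ = _ := by
        rw [integral_sum_mul_prod_unitary_conj_apply]
        simp only [hWg]
        exact sum_mul_weingarten_sum_eq A H Wg

/-- **Expansion of unitary-invariant polynomials over trace invariants** (Lemma
"Expansion over trace invariants").  Let `μ` be the Haar probability measure on `U(N)`
and `Wg : S_k → ℂ` satisfy the Weingarten relation.  If the degree-`k` homogeneous
polynomial `P(H) = Σ_{p,q} A(p,q) ∏_i H_{p_i q_i}` satisfies `P(U H U†) = P(H)` for all
unitary `U`, then
`P(H) = Σ_{σ,τ ∈ S_k} Wg(τσ⁻¹) (Σ_p A(p, p∘τ)) (Σ_a ∏_i H_{a_i a_{σ(i)}})`. -/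
theorem unitary_invariant_poly_trace_invariant_expansion (k N : ℕ) (hk : 1 ≤ k) (hN : 1 ≤ N)
    (μ : Measure (Matrix.unitaryGroup (Fin N) ℂ)) [IsProbabilityMeasure μ]
    (hinv : ∀ g : Matrix.unitaryGroup (Fin N) ℂ, μ.map (fun u => g * u) = μ)
    (Wg : Equiv.Perm (Fin k) → ℂ)
    (hWg : ∀ a b c d : Fin k → Fin N,
      (∫ u : Matrix.unitaryGroup (Fin N) ℂ,
          (∏ i, (u : Matrix (Fin N) (Fin N) ℂ) (a i) (b i)) *
            ∏ i, starRingEnd ℂ ((u : Matrix (Fin N) (Fin N) ℂ) (c i) (d i)) ∂μ) =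
        ∑ σ : Equiv.Perm (Fin k), ∑ τ : Equiv.Perm (Fin k),
          (∏ i, (if a (τ i) = c i then (1:ℂ) else 0) *
              (if b (σ i) = d i then (1:ℂ) else 0)) * Wg (τ * σ⁻¹))
    (A : (Fin k → Fin N) → (Fin k → Fin N) → ℂ)
    (H : Matrix (Fin N) (Fin N) ℂ)
    (hinvP : ∀ U : Matrix.unitaryGroup (Fin N) ℂ,
      (∑ p : Fin k → Fin N, ∑ q : Fin k → Fin N, A p q *
          ∏ i, ((U : Matrix (Fin N) (Fin N) ℂ) * H *
            (U : Matrix (Fin N) (Fin N) ℂ)ᴴ) (p i) (q i)) =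
        ∑ p : Fin k → Fin N, ∑ q : Fin k → Fin N, A p q * ∏ i, H (p i) (q i)) :
    (∑ p : Fin k → Fin N, ∑ q : Fin k → Fin N, A p q * ∏ i, H (p i) (q i)) =
      ∑ σ : Equiv.Perm (Fin k), ∑ τ : Equiv.Perm (Fin k),
        Wg (τ * σ⁻¹) * (∑ p : Fin k → Fin N, A p (fun i => p (τ i))) *
          (∑ a : Fin k → Fin N, ∏ i, H (a i) (a (σ i))) :=
  unitary_invariant_poly_trace_invariant_expansion_general k N μ Wg hWg A H hinvP
end

section
/- (Hubbard–Stratonovich / intermediate field identity.) Let N ≥ 1, let M be an N×N complex matrix, and let s ∈ ℂ. Let μ be any nonzero translation-invariant measure, finite on compact sets, on the real vector space of N×N complex Hermitian matrices. Then both integrals below converge absolutely, the denominator is nonzero, and ( ∫ exp( −(1/2)·Tr(A²) + i·(s/√N)·Tr(M†AM) ) dμ(A) ) / ( ∫ exp( −(1/2)·Tr(A²) ) dμ(A) ) = exp( −(s²/(2N))·Tr(MM†MM†) ), with both integrals taken over all Hermitian A. -/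
/-!
Under the pairing `⟨A, B⟩ = Tr (A B)` the Hermitian matrices form a Euclidean space, in which
`Tr (A²) = ‖A‖²` and `Tr (M† A M) = ⟨M M†, A⟩`. A translation-invariant measure that is finite on
compact sets is a multiple of Lebesgue measure there, so both integrals are Gaussian; completing
the square, the numerator is the denominator times `exp (c² ‖M M†‖² / 2)` with `c = i s / √N`,
and `‖M M†‖² = Tr (M M† M M†)`.
-/

open MeasureTheory
open scoped Matrix

open scoped RealInnerProductSpace ComplexOrder

section GaussianIntegral

variable {V : Type*} [NormedAddCommGroup V] [InnerProductSpace ℝ V] [FiniteDimensional ℝ V]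
  [MeasurableSpace V] [BorelSpace V] (μ : Measure V) [μ.IsAddLeftInvariant]
  [IsFiniteMeasureOnCompacts μ] {b : ℂ}

theorem integrable_cexp_neg_mul_sq_norm_add_of_isAddLeftInvariant (hb : 0 < b.re) (c : ℂ)
    (w : V) : Integrable (fun v : V ↦ Complex.exp (-b * ‖v‖ ^ 2 + c * ⟪w, v⟫)) μ := by
  rw [Measure.isAddLeftInvariant_eq_smul μ volume]
  exact (GaussianFourier.integrable_cexp_neg_mul_sq_norm_add hb c w).smul_measure
    ENNReal.coe_ne_top

theorem integral_cexp_neg_mul_sq_norm_add_of_isAddLeftInvariant (hb : 0 < b.re) (c : ℂ)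
    (w : V) :
    ∫ v, Complex.exp (-b * ‖v‖ ^ 2 + c * ⟪w, v⟫) ∂μ =
      (∫ v, Complex.exp (-b * ‖v‖ ^ 2) ∂μ) * Complex.exp (c ^ 2 * ‖w‖ ^ 2 / (4 * b)) := by
  rw [Measure.isAddLeftInvariant_eq_smul μ volume]
  simp only [integral_smul_nnreal_measure, GaussianFourier.integral_cexp_neg_mul_sq_norm_add hb,
    GaussianFourier.integral_cexp_neg_mul_sq_norm hb, smul_mul_assoc]

theorem integral_cexp_neg_mul_sq_norm_ne_zero_of_isAddLeftInvariant [NeZero μ] (hb : 0 < b.re) :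
    ∫ v, Complex.exp (-b * ‖v‖ ^ 2) ∂μ ≠ 0 := by
  have hμ := Measure.isAddLeftInvariant_eq_smul μ volume
  have hc : μ.addHaarScalarFactor volume ≠ 0 := by
    intro h
    exact NeZero.ne μ (by rw [hμ, h, zero_smul])
  have hπb : (Real.pi : ℂ) / b ≠ 0 :=
    div_ne_zero (Complex.ofReal_ne_zero.mpr Real.pi_ne_zero) (fun h ↦ by simp [h] at hb)
  rw [hμ, integral_smul_nnreal_measure, GaussianFourier.integral_cexp_neg_mul_sq_norm hb]
  exact smul_ne_zero hc fun h ↦ hπb ((Complex.cpow_eq_zero_iff _ _).mp h).1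

end GaussianIntegral

namespace ContinuousAddEquiv

variable {E F : Type*} [AddGroup E] [TopologicalSpace E] [MeasurableSpace E] [BorelSpace E]
  [AddGroup F] [TopologicalSpace F] [MeasurableSpace F] [BorelSpace F]
  (e : E ≃ₜ+ F) (μ : Measure E)

instance isAddLeftInvariant_map [ContinuousAdd E] [ContinuousAdd F] [μ.IsAddLeftInvariant] :
    (μ.map e).IsAddLeftInvariant :=
  MeasureTheory.isAddLeftInvariant_map e.toAddMonoidHom.toAddHom e.continuous.measurable
    e.surjective

instance isFiniteMeasureOnCompacts_map [IsFiniteMeasureOnCompacts μ] :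
    IsFiniteMeasureOnCompacts (μ.map e) :=
  Measure.IsFiniteMeasureOnCompacts.map μ e.toHomeomorph

instance neZero_map [NeZero μ] : NeZero (μ.map e) :=
  ⟨(Measure.map_ne_zero_iff e.continuous.aemeasurable).mpr (NeZero.ne μ)⟩

end ContinuousAddEquiv

instance Matrix.borelSpace {m n α : Type*} [Fintype m] [Fintype n] [TopologicalSpace α]
    [MeasurableSpace α] [SecondCountableTopology α] [BorelSpace α] :
    BorelSpace (Matrix m n α) :=
  inferInstanceAs (BorelSpace (m → n → α))

namespace selfAdjoint

variable {R A : Type*} [Semiring R] [StarMul R] [TrivialStar R] [AddCommGroup A] [Module R A]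
  [StarAddMonoid A] [StarModule R A]

instance continuousSMul [TopologicalSpace R] [TopologicalSpace A] [ContinuousSMul R A] :
    ContinuousSMul R (selfAdjoint A) :=
  ⟨(continuous_fst.smul (continuous_subtype_val.comp continuous_snd)).subtype_mk _⟩

instance moduleFinite [Invertible (2 : R)] [Module.Finite R A] : Module.Finite R (selfAdjoint A) :=
  Module.Finite.of_surjective (selfAdjointPart R) fun x ↦ ⟨x, x.2.selfAdjointPart_apply R⟩

end selfAdjoint

namespace Matrix

variable {n : Type*} [Fintype n]

theorem IsHermitian.ofReal_re_trace_mul {A B : Matrix n n ℂ} (hA : A.IsHermitian)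
    (hB : B.IsHermitian) : ((A * B).trace.re : ℂ) = (A * B).trace :=
  Complex.conj_eq_iff_re.mp <| by
    rw [← Complex.star_def, ← trace_conjTranspose, conjTranspose_mul, hA.eq, hB.eq,
      trace_mul_comm]

theorem IsHermitian.trace_mul_self_eq_zero_iff {A : Matrix n n ℂ} (hA : A.IsHermitian) :
    (A * A).trace = 0 ↔ A = 0 := by
  simpa only [hA.eq] using trace_conjTranspose_mul_self_eq_zero_iff (A := A)

theorem IsHermitian.re_trace_mul_self_nonneg {A : Matrix n n ℂ} (hA : A.IsHermitian) :
    0 ≤ (A * A).trace.re := by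
  simpa only [hA.eq] using
    (Complex.nonneg_iff.mp (posSemidef_conjTranspose_mul_self A).trace_nonneg).1

@[reducible]
noncomputable def selfAdjointTraceInnerCore :
    InnerProductSpace.Core ℝ (selfAdjoint (Matrix n n ℂ)) where
  inner A B := (A * B : Matrix n n ℂ).trace.re
  conj_inner_symm A B := by
    simp only [starRingEnd_apply, star_trivial]
    rw [trace_mul_comm]
  re_inner_nonneg A := IsHermitian.re_trace_mul_self_nonneg A.2
  add_left A B C := by simp [add_mul]
  smul_left A B r := by simp
  definite A h := Subtype.ext <| (IsHermitian.trace_mul_self_eq_zero_iff A.2).mp <| by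
    rw [← IsHermitian.ofReal_re_trace_mul A.2 A.2]
    exact_mod_cast h

theorem exists_continuousAddEquiv_euclideanSpace :
    ∃ (d : ℕ) (e : selfAdjoint (Matrix n n ℂ) ≃ₜ+ EuclideanSpace ℝ (Fin d)),
      ∀ A B : selfAdjoint (Matrix n n ℂ), (⟪e A, e B⟫ : ℂ) = (A * B : Matrix n n ℂ).trace := by
  obtain ⟨d, L, hL⟩ : ∃ (d : ℕ) (L : selfAdjoint (Matrix n n ℂ) ≃ₗ[ℝ] EuclideanSpace ℝ (Fin d)),
      ∀ A B, ⟪L A, L B⟫ = (A * B : Matrix n n ℂ).trace.re := by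
    let := (selfAdjointTraceInnerCore (n := n)).toNormedAddCommGroup
    let := InnerProductSpace.ofCore (selfAdjointTraceInnerCore (n := n)).toCore
    let e := (stdOrthonormalBasis ℝ (selfAdjoint (Matrix n n ℂ))).repr
    exact ⟨_, e.toLinearEquiv, e.inner_map_map⟩
  refine ⟨d, L.toContinuousLinearEquiv.toContinuousAddEquiv, fun A B ↦ ?_⟩
  rw [← IsHermitian.ofReal_re_trace_mul A.2 B.2, ← hL]
  rfl

end Matrix

section HermitianGaussian

variable {n : Type*} [Fintype n] (μ : Measure (selfAdjoint (Matrix n n ℂ)))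
  [μ.IsAddLeftInvariant] [IsFiniteMeasureOnCompacts μ] {b : ℂ}

theorem integral_cexp_neg_mul_trace_mul_self_add (hb : 0 < b.re) (c : ℂ)
    (C : selfAdjoint (Matrix n n ℂ)) :
    Integrable (fun A : selfAdjoint (Matrix n n ℂ) ↦
        Complex.exp (-b * ((A : Matrix n n ℂ) * A).trace + c * ((C : Matrix n n ℂ) * A).trace))
        μ ∧
      ∫ A, Complex.exp (-b * ((A : Matrix n n ℂ) * A).trace +
          c * ((C : Matrix n n ℂ) * A).trace) ∂μ =
        (∫ A, Complex.exp (-b * ((A : Matrix n n ℂ) * A).trace) ∂μ) *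
          Complex.exp (c ^ 2 * ((C : Matrix n n ℂ) * C).trace / (4 * b)) := by
  obtain ⟨d, e, he⟩ := Matrix.exists_continuousAddEquiv_euclideanSpace (n := n)
  have he_emb : MeasurableEmbedding e := e.toHomeomorph.measurableEmbedding
  have hsq (A : selfAdjoint (Matrix n n ℂ)) : ((A : Matrix n n ℂ) * A).trace = (‖e A‖ : ℂ) ^ 2 := by
    rw [← he, real_inner_self_eq_norm_sq]; push_cast; rfl
  have hint := integrable_cexp_neg_mul_sq_norm_add_of_isAddLeftInvariant (μ.map e) hb c (e C)
  have hval := integral_cexp_neg_mul_sq_norm_add_of_isAddLeftInvariant (μ.map e) hb c (e C)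
  rw [he_emb.integrable_map_iff] at hint
  rw [he_emb.integral_map, he_emb.integral_map] at hval
  simp only [hsq]
  simp only [← he]
  exact ⟨hint, hval⟩

theorem integral_cexp_neg_mul_trace_mul_self_ne_zero [NeZero μ] (hb : 0 < b.re) :
    ∫ A, Complex.exp (-b * ((A : Matrix n n ℂ) * A).trace) ∂μ ≠ 0 := by
  obtain ⟨d, e, he⟩ := Matrix.exists_continuousAddEquiv_euclideanSpace (n := n)
  have he_emb : MeasurableEmbedding e := e.toHomeomorph.measurableEmbedding
  have hsq (A : selfAdjoint (Matrix n n ℂ)) : ((A : Matrix n n ℂ) * A).trace = (‖e A‖ : ℂ) ^ 2 := by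
    rw [← he, real_inner_self_eq_norm_sq]; push_cast; rfl
  have h := integral_cexp_neg_mul_sq_norm_ne_zero_of_isAddLeftInvariant (μ.map e) hb
  rw [he_emb.integral_map] at h
  simpa only [hsq] using h

end HermitianGaussian

theorem hubbard_stratonovich_general (N : ℕ)
    (M : Matrix (Fin N) (Fin N) ℂ) (s : ℂ)
    (μ : Measure (selfAdjoint (Matrix (Fin N) (Fin N) ℂ)))
    (hμ0 : μ ≠ 0)
    (hμinv : ∀ B : selfAdjoint (Matrix (Fin N) (Fin N) ℂ),
      μ.map (fun A => A + B) = μ)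
    (hμfin : ∀ K : Set (selfAdjoint (Matrix (Fin N) (Fin N) ℂ)),
      IsCompact K → μ K < ⊤) :
    Integrable (fun A : selfAdjoint (Matrix (Fin N) (Fin N) ℂ) =>
        Complex.exp (-(1/2) * Matrix.trace ((A : Matrix (Fin N) (Fin N) ℂ) *
            (A : Matrix (Fin N) (Fin N) ℂ)) +
          Complex.I * (s / (Real.sqrt N : ℂ)) *
            Matrix.trace (Mᴴ * (A : Matrix (Fin N) (Fin N) ℂ) * M))) μ ∧
    Integrable (fun A : selfAdjoint (Matrix (Fin N) (Fin N) ℂ) =>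
        Complex.exp (-(1/2) * Matrix.trace ((A : Matrix (Fin N) (Fin N) ℂ) *
          (A : Matrix (Fin N) (Fin N) ℂ)))) μ ∧
    (∫ A : selfAdjoint (Matrix (Fin N) (Fin N) ℂ),
        Complex.exp (-(1/2) * Matrix.trace ((A : Matrix (Fin N) (Fin N) ℂ) *
          (A : Matrix (Fin N) (Fin N) ℂ))) ∂μ) ≠ 0 ∧
    (∫ A : selfAdjoint (Matrix (Fin N) (Fin N) ℂ),
          Complex.exp (-(1/2) * Matrix.trace ((A : Matrix (Fin N) (Fin N) ℂ) *
              (A : Matrix (Fin N) (Fin N) ℂ)) +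
            Complex.I * (s / (Real.sqrt N : ℂ)) *
              Matrix.trace (Mᴴ * (A : Matrix (Fin N) (Fin N) ℂ) * M)) ∂μ) /
      (∫ A : selfAdjoint (Matrix (Fin N) (Fin N) ℂ),
          Complex.exp (-(1/2) * Matrix.trace ((A : Matrix (Fin N) (Fin N) ℂ) *
            (A : Matrix (Fin N) (Fin N) ℂ))) ∂μ) =
      Complex.exp (-(s^2 / (2 * (N : ℂ))) * Matrix.trace (M * Mᴴ * M * Mᴴ)) := by
  have : μ.IsAddLeftInvariant := ⟨fun B ↦ by simpa only [add_comm B] using hμinv B⟩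
  have : IsFiniteMeasureOnCompacts μ := ⟨hμfin⟩
  have : NeZero μ := ⟨hμ0⟩
  have hb : 0 < (1 / 2 : ℂ).re := by norm_num
  let C : selfAdjoint (Matrix (Fin N) (Fin N) ℂ) :=
    ⟨M * Mᴴ, Matrix.isHermitian_mul_conjTranspose_self M⟩
  have hC : ∀ A : Matrix (Fin N) (Fin N) ℂ, (Mᴴ * A * M).trace = ((C : Matrix _ _ ℂ) * A).trace :=
    fun A ↦ by rw [Matrix.trace_mul_comm, ← Matrix.mul_assoc]
  have hCC : M * Mᴴ * M * Mᴴ = (C : Matrix (Fin N) (Fin N) ℂ) * C := Matrix.mul_assoc _ _ _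
  obtain ⟨hint, hval⟩ := integral_cexp_neg_mul_trace_mul_self_add μ hb (Complex.I * (s / √N)) C
  have hden := integral_cexp_neg_mul_trace_mul_self_ne_zero μ hb
  simp only [hC, hCC]
  refine ⟨hint, by simpa using (integral_cexp_neg_mul_trace_mul_self_add μ hb 0 0).1, hden, ?_⟩
  rw [hval, mul_div_cancel_left₀ _ hden]
  congr 1
  rw [mul_pow, div_pow, Complex.I_sq, ← Complex.ofReal_pow, Real.sq_sqrt N.cast_nonneg]
  push_cast
  ring

/-- **Hubbard–Stratonovich / intermediate field identity** (eq. `intermediateA`).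
For any `N × N` complex matrix `M`, any `s ∈ ℂ`, and any nonzero translation-invariant
measure `μ`, finite on compact sets, on the real vector space of Hermitian `N × N`
matrices, the normalized Gaussian average of `exp(i (s/√N) Tr(M† A M))` equals
`exp(−(s²/2N) Tr(M M† M M†))`; both integrals converge absolutely and the normalizing
integral is nonzero. -/
theorem hubbard_stratonovich (N : ℕ) (hN : 1 ≤ N)
    (M : Matrix (Fin N) (Fin N) ℂ) (s : ℂ)
    (μ : Measure (selfAdjoint (Matrix (Fin N) (Fin N) ℂ)))
    (hμ0 : μ ≠ 0)
    (hμinv : ∀ B : selfAdjoint (Matrix (Fin N) (Fin N) ℂ),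
      μ.map (fun A => A + B) = μ)
    (hμfin : ∀ K : Set (selfAdjoint (Matrix (Fin N) (Fin N) ℂ)),
      IsCompact K → μ K < ⊤) :
    Integrable (fun A : selfAdjoint (Matrix (Fin N) (Fin N) ℂ) =>
        Complex.exp (-(1/2) * Matrix.trace ((A : Matrix (Fin N) (Fin N) ℂ) *
            (A : Matrix (Fin N) (Fin N) ℂ)) +
          Complex.I * (s / (Real.sqrt N : ℂ)) *
            Matrix.trace (Mᴴ * (A : Matrix (Fin N) (Fin N) ℂ) * M))) μ ∧
    Integrable (fun A : selfAdjoint (Matrix (Fin N) (Fin N) ℂ) =>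
        Complex.exp (-(1/2) * Matrix.trace ((A : Matrix (Fin N) (Fin N) ℂ) *
          (A : Matrix (Fin N) (Fin N) ℂ)))) μ ∧
    (∫ A : selfAdjoint (Matrix (Fin N) (Fin N) ℂ),
        Complex.exp (-(1/2) * Matrix.trace ((A : Matrix (Fin N) (Fin N) ℂ) *
          (A : Matrix (Fin N) (Fin N) ℂ))) ∂μ) ≠ 0 ∧
    (∫ A : selfAdjoint (Matrix (Fin N) (Fin N) ℂ),
          Complex.exp (-(1/2) * Matrix.trace ((A : Matrix (Fin N) (Fin N) ℂ) *
              (A : Matrix (Fin N) (Fin N) ℂ)) +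
            Complex.I * (s / (Real.sqrt N : ℂ)) *
              Matrix.trace (Mᴴ * (A : Matrix (Fin N) (Fin N) ℂ) * M)) ∂μ) /
      (∫ A : selfAdjoint (Matrix (Fin N) (Fin N) ℂ),
          Complex.exp (-(1/2) * Matrix.trace ((A : Matrix (Fin N) (Fin N) ℂ) *
            (A : Matrix (Fin N) (Fin N) ℂ))) ∂μ) =
      Complex.exp (-(s^2 / (2 * (N : ℂ))) * Matrix.trace (M * Mᴴ * M * Mᴴ)) :=
  hubbard_stratonovich_general N M s μ hμ0 hμinv hμfin
end

section
/- Let N ≥ 1 and let J be a fixed N×N complex matrix. Let γ be the Gaussian probability measure on the real vector space of N×N complex Hermitian matrices obtained by normalizing the density exp(−(1/2)·Tr(A²)) with respect to a translation-invariant measure. For λ in the cut plane ℂ∖(−∞,0], define Z(λ) = ∫ det( I − i·√(λ/N)·A )^{−N} · exp( −N·Tr( J·(I − i·√(λ/N)·A)⁻¹·J† ) ) dγ(A), where √λ is the principal branch of the complex square root. Then for every such λ the integrand is γ-integrable, and the function λ ↦ Z(λ) is analytic (complex differentiable) on ℂ∖(−∞,0]. -/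
/-!
Write `c = √(λ/N)`; it has positive real part on the cut plane. For Hermitian `A`, the
eigenvector unitary of `A` diagonalises `1 - i c A`, whose eigenvalues `1 - i c a` (`a` real)
have modulus at least `Re c / |c|` since `Re ((1 - i c a) c̄) = Re c`. Hence
`|det (1 - i c A)|^{-N} ≤ (|c| / Re c)^{N²}` and
`|Tr (J (1 - i c A)⁻¹ J†)| ≤ (|c| / Re c) Tr (J J†)`, so the integrand is bounded uniformly
in `A` and locally uniformly in `λ`. Since `γ` is finite the integrand is integrable, and
Cauchy's estimate on small discs bounds its `λ`-derivative uniformly, so differentiation under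
the integral sign applies.
-/

open MeasureTheory
open scoped Matrix

instance matrixBorelSpace {m n α : Type*} [Countable m] [Countable n] [TopologicalSpace α]
    [MeasurableSpace α] [SecondCountableTopology α] [BorelSpace α] :
    BorelSpace (Matrix m n α) :=
  inferInstanceAs (BorelSpace (m → n → α))

namespace Complex

theorem re_div_norm_pos {c : ℂ} (hc : 0 < c.re) : 0 < c.re / ‖c‖ :=
  div_pos hc (norm_pos_iff.mpr fun h => by simp [h] at hc)

theorem re_div_norm_le_norm_one_sub_I_mul_mul (c : ℂ) (d : ℝ) :
    c.re / ‖c‖ ≤ ‖1 - I * c * d‖ := by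
  refine div_le_of_le_mul₀ (norm_nonneg _) (norm_nonneg _) ?_
  have key : ((1 - I * c * d) * (starRingEnd ℂ) c).re = c.re := by
    simp only [mul_re, sub_re, sub_im, mul_im, one_re, one_im, I_re, I_im, ofReal_re,
      ofReal_im, conj_re, conj_im]
    ring
  calc c.re = ((1 - I * c * d) * (starRingEnd ℂ) c).re := key.symm
    _ ≤ ‖(1 - I * c * d) * (starRingEnd ℂ) c‖ := re_le_norm _
    _ = ‖1 - I * c * d‖ * ‖c‖ := by rw [norm_mul, norm_conj]

theorem re_cpow_one_div_two_pos {z : ℂ} (hz : z ∈ slitPlane) : 0 < (z ^ ((1 : ℂ) / 2)).re := by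
  have harg : (log z * (1 / 2)).im = arg z / 2 := by simp [log_im, div_eq_mul_inv]
  rw [cpow_def_of_ne_zero (slitPlane_ne_zero hz), exp_re, harg]
  refine mul_pos (Real.exp_pos _) (Real.cos_pos_of_mem_Ioo ⟨?_, ?_⟩)
  · linarith [neg_pi_lt_arg z]
  · linarith [(arg_le_pi z).lt_of_ne (slitPlane_arg_ne_pi hz)]

theorem setOf_not_im_eq_zero_and_re_nonpos :
    {z : ℂ | ¬ (z.im = 0 ∧ z.re ≤ 0)} = slitPlane := by
  ext z
  simp only [Set.mem_ofPred_eq, mem_slitPlane_iff, not_and_or, not_le]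
  tauto

theorem div_natCast_mem_slitPlane {z : ℂ} (hz : z ∈ slitPlane) {N : ℕ} (hN : N ≠ 0) :
    z / N ∈ slitPlane := by
  have hN' : (0 : ℝ) < N := by positivity
  rw [mem_slitPlane_iff] at hz ⊢
  rw [← ofReal_natCast, div_ofReal_re, div_ofReal_im]
  exact hz.imp (fun h => div_pos h hN') (fun h => div_ne_zero h hN'.ne')

end Complex

namespace Matrix

section Resolvent

variable {n : Type*} [Fintype n] [DecidableEq n]

theorem det_mul_mul_star_of_mem_unitaryGroup {U : Matrix n n ℂ} (hU : U ∈ unitaryGroup n ℂ)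
    (X : Matrix n n ℂ) : det (U * X * star U) = det X := by
  rw [det_mul, det_mul, mul_comm, ← mul_assoc, ← det_mul, mem_unitaryGroup_iff'.mp hU, det_one,
    one_mul]

theorem inv_mul_mul_star_of_mem_unitaryGroup {U : Matrix n n ℂ} (hU : U ∈ unitaryGroup n ℂ)
    (X : Matrix n n ℂ) : (U * X * star U)⁻¹ = U * X⁻¹ * star U := by
  have hinv : U⁻¹ = star U := inv_eq_left_inv (mem_unitaryGroup_iff'.mp hU)
  have hinv' : (star U)⁻¹ = U := inv_eq_left_inv (mem_unitaryGroup_iff.mp hU)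
  rw [mul_inv_rev, mul_inv_rev, hinv, hinv', mul_assoc]

theorem trace_mul_diagonal_mul_conjTranspose (C : Matrix n n ℂ) (x : n → ℂ) :
    trace (C * diagonal x * Cᴴ) = ∑ k, x k * ∑ i, (Complex.normSq (C i k) : ℂ) := by
  simp only [trace, diag, mul_apply (M := C * diagonal x), mul_diagonal, conjTranspose_apply,
    Finset.mul_sum]
  rw [Finset.sum_comm]
  refine Finset.sum_congr rfl fun k _ => Finset.sum_congr rfl fun i _ => ?_
  rw [RCLike.star_def, mul_comm (C i k), mul_assoc, Complex.mul_conj]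

theorem re_trace_mul_conjTranspose (C : Matrix n n ℂ) :
    (trace (C * Cᴴ)).re = ∑ k, ∑ i, Complex.normSq (C i k) := by
  simpa using congrArg Complex.re (trace_mul_diagonal_mul_conjTranspose C 1)

theorem norm_trace_mul_diagonal_mul_conjTranspose_le (C : Matrix n n ℂ) {x : n → ℂ} {W : ℝ}
    (hx : ∀ k, ‖x k‖ ≤ W) : ‖trace (C * diagonal x * Cᴴ)‖ ≤ W * (trace (C * Cᴴ)).re := by
  have hsum : ∀ k, 0 ≤ ∑ i, Complex.normSq (C i k) := fun k =>
    Finset.sum_nonneg fun i _ => Complex.normSq_nonneg _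
  rw [trace_mul_diagonal_mul_conjTranspose, re_trace_mul_conjTranspose, Finset.mul_sum]
  refine (norm_sum_le _ _).trans (Finset.sum_le_sum fun k _ => ?_)
  rw [norm_mul, ← Complex.ofReal_sum, Complex.norm_real, Real.norm_of_nonneg (hsum k)]
  exact mul_le_mul_of_nonneg_right (hx k) (hsum k)

namespace IsHermitian

variable {A : Matrix n n ℂ}

theorem one_sub_smul_eq_conj_diagonal (hA : A.IsHermitian) (c : ℂ) :
    1 - c • A = (hA.eigenvectorUnitary : Matrix n n ℂ) *
      diagonal (fun k => 1 - c * hA.eigenvalues k) *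
        star (hA.eigenvectorUnitary : Matrix n n ℂ) := by
  conv_lhs => rw [hA.spectral_theorem]
  rw [← Unitary.conjStarAlgAut_apply (S := ℂ),
    ← map_one (Unitary.conjStarAlgAut ℂ _ hA.eigenvectorUnitary), ← map_smul, ← map_sub]
  congr 1
  ext i j
  by_cases h : i = j <;> simp [h]

theorem pow_re_div_norm_le_norm_det (hA : A.IsHermitian) {c : ℂ} (hc : 0 ≤ c.re) :
    (c.re / ‖c‖) ^ Fintype.card n ≤ ‖det (1 - (Complex.I * c) • A)‖ := by
  rw [hA.one_sub_smul_eq_conj_diagonal,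
    det_mul_mul_star_of_mem_unitaryGroup hA.eigenvectorUnitary.2, det_diagonal, norm_prod,
    ← Finset.card_univ, ← Finset.prod_const]
  exact Finset.prod_le_prod (fun _ _ => by positivity)
    fun k _ => Complex.re_div_norm_le_norm_one_sub_I_mul_mul c _

theorem det_one_sub_I_smul_ne_zero (hA : A.IsHermitian) {c : ℂ} (hc : 0 < c.re) :
    det (1 - (Complex.I * c) • A) ≠ 0 :=
  norm_pos_iff.mp ((pow_pos (Complex.re_div_norm_pos hc) _).trans_le
    (hA.pow_re_div_norm_le_norm_det hc.le))

theorem norm_trace_mul_inv_one_sub_mul_conjTranspose_le (hA : A.IsHermitian) {c : ℂ}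
    (hc : 0 < c.re) (J : Matrix n n ℂ) :
    ‖trace (J * (1 - (Complex.I * c) • A)⁻¹ * Jᴴ)‖ ≤ ‖c‖ / c.re * (trace (J * Jᴴ)).re := by
  set U : Matrix n n ℂ := (hA.eigenvectorUnitary : Matrix n n ℂ)
  set w : n → ℂ := fun k => 1 - Complex.I * c * hA.eigenvalues k
  have hw : ∀ k, c.re / ‖c‖ ≤ ‖w k‖ := fun k =>
    Complex.re_div_norm_le_norm_one_sub_I_mul_mul c _
  have hb := Complex.re_div_norm_pos hc
  have hw0 : ∀ k, w k ≠ 0 := fun k h => by simpa [h] using hb.trans_le (hw k)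
  have hinv : (diagonal w)⁻¹ = diagonal fun k => (w k)⁻¹ :=
    inv_eq_left_inv <| by simp [diagonal_mul_diagonal, hw0]
  have hJU : (J * U) * (J * U)ᴴ = J * Jᴴ := by
    rw [conjTranspose_mul, ← star_eq_conjTranspose U, mul_assoc, ← mul_assoc U,
      mem_unitaryGroup_iff.mp hA.eigenvectorUnitary.2, one_mul]
  have hres : J * (1 - (Complex.I * c) • A)⁻¹ * Jᴴ
      = (J * U) * diagonal (fun k => (w k)⁻¹) * (J * U)ᴴ := by
    rw [hA.one_sub_smul_eq_conj_diagonal,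
      inv_mul_mul_star_of_mem_unitaryGroup hA.eigenvectorUnitary.2, hinv, conjTranspose_mul,
      ← star_eq_conjTranspose U]
    simp only [mul_assoc]
    rfl
  rw [hres, ← hJU]
  refine norm_trace_mul_diagonal_mul_conjTranspose_le _ fun k => ?_
  rw [norm_inv, ← inv_div]
  exact inv_anti₀ hb (hw k)

end IsHermitian

end Resolvent

section Differentiable

variable {𝕜 : Type*} [NontriviallyNormedField 𝕜] {l m n : Type*} {z : 𝕜}

theorem differentiableAt_mul_apply [Fintype m] {f : 𝕜 → Matrix l m 𝕜} {g : 𝕜 → Matrix m n 𝕜}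
    (hf : ∀ i j, DifferentiableAt 𝕜 (fun w => f w i j) z)
    (hg : ∀ i j, DifferentiableAt 𝕜 (fun w => g w i j) z) (i : l) (j : n) :
    DifferentiableAt 𝕜 (fun w => (f w * g w) i j) z := by
  simp only [mul_apply]
  exact DifferentiableAt.fun_sum fun k _ => (hf i k).mul (hg k j)

theorem differentiableAt_trace [Fintype n] {f : 𝕜 → Matrix n n 𝕜}
    (hf : ∀ i j, DifferentiableAt 𝕜 (fun w => f w i j) z) :
    DifferentiableAt 𝕜 (fun w => (f w).trace) z := by
  simp only [trace, diag]
  exact DifferentiableAt.fun_sum fun i _ => hf i i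

variable [Fintype n] [DecidableEq n] {f : 𝕜 → Matrix n n 𝕜}

theorem differentiableAt_det (hf : ∀ i j, DifferentiableAt 𝕜 (fun w => f w i j) z) :
    DifferentiableAt 𝕜 (fun w => (f w).det) z := by
  simp only [det_apply']
  exact DifferentiableAt.fun_sum fun σ _ =>
    (DifferentiableAt.fun_finsetProd fun i _ => hf (σ i) i).const_mul _

theorem differentiableAt_adjugate_apply (hf : ∀ i j, DifferentiableAt 𝕜 (fun w => f w i j) z)
    (i j : n) : DifferentiableAt 𝕜 (fun w => (f w).adjugate i j) z := by
  simp only [adjugate_apply]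
  refine differentiableAt_det fun a b => ?_
  rcases eq_or_ne a j with rfl | hne
  · simpa only [updateRow_self] using differentiableAt_const _
  · simpa only [updateRow_ne hne] using hf a b

theorem differentiableAt_inv_apply (hf : ∀ i j, DifferentiableAt 𝕜 (fun w => f w i j) z)
    (hdet : (f z).det ≠ 0) (i j : n) : DifferentiableAt 𝕜 (fun w => (f w)⁻¹ i j) z := by
  simp only [inv_def, Ring.inverse_eq_inv', smul_apply, smul_eq_mul]
  exact ((differentiableAt_det hf).inv hdet).mul (differentiableAt_adjugate_apply hf i j)

end Differentiable

theorem measurable_inv {n : Type*} [Fintype n] [DecidableEq n] :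
    Measurable (fun B : Matrix n n ℂ => B⁻¹) := by
  simp only [inv_def, Ring.inverse_eq_inv']
  exact (continuous_id.matrix_det.measurable.inv).smul continuous_id.matrix_adjugate.measurable

section ResolventIntegrand

variable {n : Type*} [Fintype n] [DecidableEq n]

/-- With `m = N` and `c = √(λ / N)` this is the integrand of the generating function. -/
noncomputable def resolventIntegrand (J : Matrix n n ℂ) (m : ℕ) (c : ℂ) (A : Matrix n n ℂ) :
    ℂ :=
  det (1 - (Complex.I * c) • A) ^ (-(m : ℤ)) *
    Complex.exp (-(m : ℂ) * trace (J * (1 - (Complex.I * c) • A)⁻¹ * Jᴴ))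

variable (J : Matrix n n ℂ) (m : ℕ)

theorem norm_resolventIntegrand_le {A : Matrix n n ℂ} (hA : A.IsHermitian) {c : ℂ}
    (hc : 0 < c.re) :
    ‖resolventIntegrand J m c A‖ ≤
      (‖c‖ / c.re) ^ (Fintype.card n * m) *
        Real.exp (m * (‖c‖ / c.re) * (trace (J * Jᴴ)).re) := by
  have hdet := hA.pow_re_div_norm_le_norm_det hc.le
  have htr := hA.norm_trace_mul_inv_one_sub_mul_conjTranspose_le hc J
  have hb := Complex.re_div_norm_pos hc
  rw [resolventIntegrand, norm_mul, norm_zpow, Complex.norm_exp]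
  simp only [_root_.zpow_neg, zpow_natCast]
  gcongr ?_ * Real.exp ?_
  · calc (‖det (1 - (Complex.I * c) • A)‖ ^ m)⁻¹
        ≤ (((c.re / ‖c‖) ^ Fintype.card n) ^ m)⁻¹ := by gcongr
      _ = (‖c‖ / c.re) ^ (Fintype.card n * m) := by rw [← pow_mul, ← inv_pow, inv_div]
  · calc (-(m : ℂ) * trace (J * (1 - (Complex.I * c) • A)⁻¹ * Jᴴ)).re
        ≤ ‖-(m : ℂ) * trace (J * (1 - (Complex.I * c) • A)⁻¹ * Jᴴ)‖ := Complex.re_le_norm _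
      _ = m * ‖trace (J * (1 - (Complex.I * c) • A)⁻¹ * Jᴴ)‖ := by simp
      _ ≤ m * (‖c‖ / c.re) * (trace (J * Jᴴ)).re :=
          (mul_le_mul_of_nonneg_left htr m.cast_nonneg).trans_eq (mul_assoc _ _ _).symm

theorem exists_bound_resolventIntegrand {K : Set ℂ} (hK : IsCompact K)
    (hK_re : ∀ c ∈ K, 0 < c.re) :
    ∃ C, ∀ c ∈ K, ∀ A : Matrix n n ℂ, A.IsHermitian → ‖resolventIntegrand J m c A‖ ≤ C := by
  have hcont : ContinuousOn (fun c : ℂ => ‖c‖ / c.re) K := fun c hc =>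
    (continuous_norm.continuousAt.div Complex.continuous_re.continuousAt
      (hK_re c hc).ne').continuousWithinAt
  obtain ⟨W, hW⟩ := hK.bddAbove_image hcont
  refine ⟨W ^ (Fintype.card n * m) * Real.exp (m * W * (trace (J * Jᴴ)).re),
    fun c hc A hA => (norm_resolventIntegrand_le J m hA (hK_re c hc)).trans ?_⟩
  have hcW : ‖c‖ / c.re ≤ W := hW ⟨c, hc, rfl⟩
  have hc0 : 0 ≤ ‖c‖ / c.re := div_nonneg (norm_nonneg _) (hK_re c hc).le
  have hW0 : 0 ≤ W := hc0.trans hcW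
  have hJ : 0 ≤ (trace (J * Jᴴ)).re := by
    rw [re_trace_mul_conjTranspose]
    exact Finset.sum_nonneg fun _ _ => Finset.sum_nonneg fun _ _ => Complex.normSq_nonneg _
  gcongr

theorem differentiableAt_resolventIntegrand {A : Matrix n n ℂ} {c : ℂ}
    (hdet : det (1 - (Complex.I * c) • A) ≠ 0) :
    DifferentiableAt ℂ (fun c => resolventIntegrand J m c A) c := by
  have hentries : ∀ i j, DifferentiableAt ℂ (fun c => (1 - (Complex.I * c) • A) i j) c :=
    fun i j => by simp only [sub_apply, smul_apply, smul_eq_mul]; fun_prop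
  have hconst (M : Matrix n n ℂ) : ∀ i j, DifferentiableAt ℂ (fun _ : ℂ => M i j) c :=
    fun _ _ => differentiableAt_const _
  have htrace := differentiableAt_trace <| differentiableAt_mul_apply
    (differentiableAt_mul_apply (hconst J) (differentiableAt_inv_apply hentries hdet)) (hconst Jᴴ)
  exact ((differentiableAt_det hentries).zpow (.inl hdet)).mul ((htrace.const_mul _).cexp)

theorem measurable_resolventIntegrand (c : ℂ) : Measurable (resolventIntegrand J m c) := by
  have hres : Measurable fun A : Matrix n n ℂ => 1 - (Complex.I * c) • A :=
    (continuous_const.sub (continuous_const_smul _)).measurable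
  have hdet : Measurable fun A : Matrix n n ℂ => det (1 - (Complex.I * c) • A) :=
    continuous_id.matrix_det.measurable.comp hres
  have htrace : Measurable fun A : Matrix n n ℂ =>
      trace (J * (1 - (Complex.I * c) • A)⁻¹ * Jᴴ) :=
    ((continuous_const.matrix_mul continuous_id).matrix_mul
      continuous_const).matrix_trace.measurable.comp (measurable_inv.comp hres)
  exact (hdet.pow_const _).mul ((htrace.const_mul _).cexp)

end ResolventIntegrand

end Matrix

section ParametricIntegral

open Filter Metric

variable {α E : Type*} [MeasurableSpace α] {μ : Measure α} [NormedAddCommGroup E]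

theorem aestronglyMeasurable_deriv_apply {𝕜 : Type*} [NontriviallyNormedField 𝕜]
    [NormedSpace 𝕜 E] {F : 𝕜 → α → E} {x₀ : 𝕜} (hF_meas : ∀ x, AEStronglyMeasurable (F x) μ)
    (hF_diff : ∀ᵐ a ∂μ, DifferentiableAt 𝕜 (F · a) x₀) :
    AEStronglyMeasurable (fun a => deriv (F · a) x₀) μ := by
  obtain ⟨u, hu⟩ := (nhdsWithin x₀ {x₀}ᶜ).exists_seq_tendsto
  refine aestronglyMeasurable_of_tendsto_ae atTop (f := fun k a => slope (F · a) x₀ (u k))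
    (fun k => ?_) ?_
  · simp only [slope_def_module]
    exact ((hF_meas _).sub (hF_meas x₀)).const_smul _
  · filter_upwards [hF_diff] with a ha
    exact (hasDerivAt_iff_tendsto_slope.mp ha.hasDerivAt).comp hu

/-- The Cauchy estimates turn the domination of `F` into a domination of its derivative. -/
theorem differentiableOn_integral_of_dominated_on_isCompact [NormedSpace ℂ E]
    {F : ℂ → α → E} {U : Set ℂ} (hU : IsOpen U)
    (hF_meas : ∀ z, AEStronglyMeasurable (F z) μ)
    (hF_diff : ∀ a, DifferentiableOn ℂ (F · a) U)
    (h_bound : ∀ K ⊆ U, IsCompact K →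
      ∃ g : α → ℝ, Integrable g μ ∧ ∀ z ∈ K, ∀ a, ‖F z a‖ ≤ g a) :
    DifferentiableOn ℂ (fun z => ∫ a, F z a ∂μ) U := by
  intro x₀ hx₀
  obtain ⟨ε, hε, hεU⟩ := nhds_basis_closedBall.mem_iff.mp (hU.mem_nhds hx₀)
  obtain ⟨g, hg, hFg⟩ := h_bound _ hεU (isCompact_closedBall x₀ ε)
  have hr : 0 < ε / 2 := half_pos hε
  have hdiff : ∀ a, ∀ z ∈ closedBall x₀ ε, DifferentiableAt ℂ (F · a) z := fun a z hz =>
    (hF_diff a).differentiableAt (hU.mem_nhds (hεU hz))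
  have hderiv : ∀ a, ∀ x ∈ ball x₀ (ε / 2), ‖deriv (F · a) x‖ ≤ g a / (ε / 2) := by
    intro a x hx
    have hsub : closedBall x (ε / 2) ⊆ closedBall x₀ ε :=
      closedBall_subset_closedBall' (by linarith [mem_ball.mp hx])
    exact Complex.norm_deriv_le_of_forall_mem_sphere_norm_le hr
      ((hF_diff a).diffContOnCl_ball (hsub.trans hεU))
      fun z hz => hFg z (hsub (sphere_subset_closedBall hz)) a
  have hint : Integrable (F x₀) μ :=
    hg.mono' (hF_meas x₀) (ae_of_all _ (hFg x₀ (mem_closedBall_self hε.le)))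
  have hball : ball x₀ (ε / 2) ⊆ closedBall x₀ ε :=
    (ball_subset_ball (by linarith)).trans ball_subset_closedBall
  have hF'_meas := aestronglyMeasurable_deriv_apply hF_meas
    (ae_of_all _ fun a => hdiff a x₀ (mem_closedBall_self hε.le))
  exact (hasDerivAt_integral_of_dominated_loc_of_deriv_le (ball_mem_nhds x₀ hr)
    (.of_forall hF_meas) hint hF'_meas (ae_of_all _ hderiv) (hg.div_const _)
    (ae_of_all _ fun a x hx => (hdiff a x (hball hx)).hasDerivAt)).2.differentiableAt
    |>.differentiableWithinAt

end ParametricIntegral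

theorem generating_function_analytic_on_cut_plane_general (N : ℕ) (hN : 1 ≤ N)
    (J : Matrix (Fin N) (Fin N) ℂ)
    (ν : Measure (selfAdjoint (Matrix (Fin N) (Fin N) ℂ)))
    (γ : Measure (selfAdjoint (Matrix (Fin N) (Fin N) ℂ)))
    (hγ : γ = (ν Set.univ)⁻¹ • ν) :
    (∀ lam ∈ {z : ℂ | ¬ (z.im = 0 ∧ z.re ≤ 0)},
      Integrable (fun A : selfAdjoint (Matrix (Fin N) (Fin N) ℂ) =>
        (Matrix.det ((1 : Matrix (Fin N) (Fin N) ℂ) -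
            (Complex.I * (lam / (N : ℂ)) ^ ((1:ℂ)/2)) •
              (A : Matrix (Fin N) (Fin N) ℂ))) ^ (-(N : ℤ)) *
          Complex.exp (-(N : ℂ) * Matrix.trace
            (J * ((1 : Matrix (Fin N) (Fin N) ℂ) -
              (Complex.I * (lam / (N : ℂ)) ^ ((1:ℂ)/2)) •
                (A : Matrix (Fin N) (Fin N) ℂ))⁻¹ * Jᴴ))) γ) ∧
    DifferentiableOn ℂ
      (fun lam : ℂ =>
        ∫ A : selfAdjoint (Matrix (Fin N) (Fin N) ℂ),
          (Matrix.det ((1 : Matrix (Fin N) (Fin N) ℂ) -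
              (Complex.I * (lam / (N : ℂ)) ^ ((1:ℂ)/2)) •
                (A : Matrix (Fin N) (Fin N) ℂ))) ^ (-(N : ℤ)) *
            Complex.exp (-(N : ℂ) * Matrix.trace
              (J * ((1 : Matrix (Fin N) (Fin N) ℂ) -
                (Complex.I * (lam / (N : ℂ)) ^ ((1:ℂ)/2)) •
                  (A : Matrix (Fin N) (Fin N) ℂ))⁻¹ * Jᴴ)) ∂γ)
      {z : ℂ | ¬ (z.im = 0 ∧ z.re ≤ 0)} := by
  have : IsFiniteMeasure γ := hγ ▸ IsFiniteMeasure.average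
  set s : ℂ → ℂ := fun z => (z / N) ^ ((1 : ℂ) / 2)
  have hs_re : ∀ z ∈ Complex.slitPlane, 0 < (s z).re := fun z hz =>
    Complex.re_cpow_one_div_two_pos (Complex.div_natCast_mem_slitPlane hz (by omega))
  have hs_diff : DifferentiableOn ℂ s Complex.slitPlane := fun z hz =>
    ((differentiableAt_id.div_const _).cpow_const
      (Complex.div_natCast_mem_slitPlane hz (by omega))).differentiableWithinAt
  have hmeas (z : ℂ) : AEStronglyMeasurable
      (fun A : selfAdjoint (Matrix (Fin N) (Fin N) ℂ) => J.resolventIntegrand N (s z) A) γ :=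
    ((Matrix.measurable_resolventIntegrand J N _).comp measurable_subtype_coe).aestronglyMeasurable
  have hbound : ∀ K ⊆ Complex.slitPlane, IsCompact K → ∃ C : ℝ, ∀ z ∈ K,
      ∀ A : selfAdjoint (Matrix (Fin N) (Fin N) ℂ), ‖J.resolventIntegrand N (s z) A‖ ≤ C := by
    intro K hK hKc
    obtain ⟨C, hC⟩ := Matrix.exists_bound_resolventIntegrand J N
      (hKc.image_of_continuousOn (hs_diff.continuousOn.mono hK))
      (by rintro _ ⟨z, hz, rfl⟩; exact hs_re z (hK hz))
    exact ⟨C, fun z hz A => hC _ ⟨z, hz, rfl⟩ A A.2⟩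
  rw [Complex.setOf_not_im_eq_zero_and_re_nonpos]
  refine ⟨fun z hz => ?_, differentiableOn_integral_of_dominated_on_isCompact
    Complex.isOpen_slitPlane hmeas (fun A z hz => ?_) fun K hK hKc => ?_⟩
  · obtain ⟨C, hC⟩ := hbound {z} (Set.singleton_subset_iff.mpr hz) isCompact_singleton
    exact (integrable_const C).mono' (hmeas z) (ae_of_all _ (hC z rfl))
  · exact ((Matrix.differentiableAt_resolventIntegrand J N
      (Matrix.IsHermitian.det_one_sub_I_smul_ne_zero A.2 (hs_re z hz))).comp z
      (hs_diff.differentiableAt (Complex.isOpen_slitPlane.mem_nhds hz))).differentiableWithinAt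
  · obtain ⟨C, hC⟩ := hbound K hK hKc
    exact ⟨fun _ => C, integrable_const C, hC⟩

/-- **Analyticity of the intermediate-field representation of the generating function**
(Proposition after Lemma `boundresolvent`).  Let `γ` be the Gaussian probability measure
on Hermitian `N × N` matrices obtained by normalizing the density `exp(−½ Tr A²)` with
respect to some (any) nonzero translation-invariant measure `μ`, finite on compacts.
For `λ` in the cut plane `ℂ ∖ (−∞, 0]` set
`Z(λ) = ∫ det(1 − i √(λ/N) A)^{−N} exp(−N Tr(J (1 − i √(λ/N) A)⁻¹ J†)) dγ(A)`.
Then the integrand is `γ`-integrable for every such `λ`, and `Z` is analytic (complex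
differentiable) on the cut plane. -/
theorem generating_function_analytic_on_cut_plane (N : ℕ) (hN : 1 ≤ N)
    (J : Matrix (Fin N) (Fin N) ℂ)
    (μ : Measure (selfAdjoint (Matrix (Fin N) (Fin N) ℂ)))
    (hμ0 : μ ≠ 0)
    (hμinv : ∀ B : selfAdjoint (Matrix (Fin N) (Fin N) ℂ),
      μ.map (fun A => A + B) = μ)
    (hμfin : ∀ K : Set (selfAdjoint (Matrix (Fin N) (Fin N) ℂ)),
      IsCompact K → μ K < ⊤)
    (ν : Measure (selfAdjoint (Matrix (Fin N) (Fin N) ℂ)))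
    (hν : ν = μ.withDensity (fun A =>
      ENNReal.ofReal (Real.exp (-(1/2) *
        (Matrix.trace ((A : Matrix (Fin N) (Fin N) ℂ) *
          (A : Matrix (Fin N) (Fin N) ℂ))).re))))
    (γ : Measure (selfAdjoint (Matrix (Fin N) (Fin N) ℂ)))
    (hγ : γ = (ν Set.univ)⁻¹ • ν) :
    (∀ lam ∈ {z : ℂ | ¬ (z.im = 0 ∧ z.re ≤ 0)},
      Integrable (fun A : selfAdjoint (Matrix (Fin N) (Fin N) ℂ) =>
        (Matrix.det ((1 : Matrix (Fin N) (Fin N) ℂ) -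
            (Complex.I * (lam / (N : ℂ)) ^ ((1:ℂ)/2)) •
              (A : Matrix (Fin N) (Fin N) ℂ))) ^ (-(N : ℤ)) *
          Complex.exp (-(N : ℂ) * Matrix.trace
            (J * ((1 : Matrix (Fin N) (Fin N) ℂ) -
              (Complex.I * (lam / (N : ℂ)) ^ ((1:ℂ)/2)) •
                (A : Matrix (Fin N) (Fin N) ℂ))⁻¹ * Jᴴ))) γ) ∧
    DifferentiableOn ℂ
      (fun lam : ℂ =>
        ∫ A : selfAdjoint (Matrix (Fin N) (Fin N) ℂ),
          (Matrix.det ((1 : Matrix (Fin N) (Fin N) ℂ) -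
              (Complex.I * (lam / (N : ℂ)) ^ ((1:ℂ)/2)) •
                (A : Matrix (Fin N) (Fin N) ℂ))) ^ (-(N : ℤ)) *
            Complex.exp (-(N : ℂ) * Matrix.trace
              (J * ((1 : Matrix (Fin N) (Fin N) ℂ) -
                (Complex.I * (lam / (N : ℂ)) ^ ((1:ℂ)/2)) •
                  (A : Matrix (Fin N) (Fin N) ℂ))⁻¹ * Jᴴ)) ∂γ)
      {z : ℂ | ¬ (z.im = 0 ∧ z.re ≤ 0)} :=
  generating_function_analytic_on_cut_plane_general N hN J ν γ hγ
end

section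
/- Let T be a tree (a connected acyclic simple graph) on the vertex set {1,…,n}, n ≥ 1, and let t : E(T) → [0,1] assign a number in [0,1] to each edge of T. Define the symmetric n×n real matrix C by C_{ii} = 1 and, for i ≠ j, C_{ij} = min{ t_e : e an edge on the unique path in T joining i and j }. Then C is positive semidefinite: for every x ∈ ℝⁿ, Σ_{i,j} x_i C_{ij} x_j ≥ 0. -/
/-!
Layer-cake argument. For `s ∈ [0, 1]`, let `T_s` be `T` with the edges of weight `< s` removed.
Then `s ≤ C i j` exactly when `i` and `j` lie in the same component of `T_s`, so
`C i j = ∫₀¹ 1[i ~ j in T_s] ds`. Each integrand is the kernel "same component", whose quadratic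
form is the sum over components of the squared sums of `x`, hence nonnegative; so is its integral.
-/

open MeasureTheory Set

/-- For a tree `T` on `{1,…,n}` with edge variables `t`, the matrix entry
`C_{ij} = min { t_e : e ∈ P^T_{i↔j} }` for `i ≠ j` (minimum over the unique path in `T`
joining `i` and `j`) and `C_{ii} = 1`.  It is expressed as the supremum over all walks
`w` from `i` to `j` in `T` of the minimum of `t_e` over the edges of `w` (convention
`min ∅ = 1`): with `t ∈ [0,1]^{E(T)}`, every walk from `i` to `j` passes through all
edges of the unique path, so the supremum is attained on the path, and for `i = j` the
empty walk realizes the value `1`. -/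
noncomputable def treeCovariance (n : ℕ) (T : SimpleGraph (Fin n))
    (t : Sym2 (Fin n) → ℝ) (i j : Fin n) : ℝ :=
  sSup {r : ℝ | ∃ w : T.Walk i j, r = ((w.edges.map t).foldr min 1)}

namespace List

variable {α : Type*} [LinearOrder α]

theorem le_foldr_min_iff {a b : α} {l : List α} :
    a ≤ l.foldr min b ↔ a ≤ b ∧ ∀ c ∈ l, a ≤ c := by
  induction l with
  | nil => simp
  | cons c l ih => simp only [foldr_cons, le_min_iff, ih, mem_cons, forall_eq_or_imp]; tauto

theorem foldr_min_le (l : List α) (b : α) : l.foldr min b ≤ b :=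
  (le_foldr_min_iff.1 le_rfl).1

theorem foldr_min_mem (l : List α) (b : α) : l.foldr min b ∈ b :: l := by
  induction l with
  | nil => simp
  | cons c l ih =>
    rcases min_choice c (l.foldr min b) with h | h <;> rw [foldr_cons, h]
    · simp
    · rcases mem_cons.1 ih with h' | h' <;> simp [h']

end List

theorem sum_sum_mul_ite_comp_eq_mul_nonneg {ι κ : Type*} [Fintype ι] [Fintype κ]
    [DecidableEq κ] (f : ι → κ) (x : ι → ℝ) :
    0 ≤ ∑ i, ∑ j, x i * (if f i = f j then 1 else 0) * x j := by
  have hrow : ∀ i, ∑ j, x i * (if f i = f j then 1 else 0) * x j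
      = x i * ∑ j with f j = f i, x j := by
    intro i
    rw [Finset.sum_filter, Finset.mul_sum]
    exact Finset.sum_congr rfl fun j _ => by split_ifs <;> simp_all [eq_comm]
  have hfibers : ∑ i, ∑ j, x i * (if f i = f j then 1 else 0) * x j
      = ∑ k, (∑ i with f i = k, x i) ^ 2 := by
    simp_rw [hrow, sq, Finset.sum_mul]
    rw [← Finset.sum_fiberwise Finset.univ f]
    refine Finset.sum_congr rfl fun k _ => Finset.sum_congr rfl fun i hi => ?_
    rw [(Finset.mem_filter.1 hi).2]
  rw [hfibers]
  exact Finset.sum_nonneg fun k _ => sq_nonneg _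

theorem integral_ite_le_eq {c : ℝ} (hc : c ∈ Icc (0 : ℝ) 1) :
    ∫ s in (0 : ℝ)..1, (if s ≤ c then (1 : ℝ) else 0) = c := by
  have hind : (fun s : ℝ => if s ≤ c then (1 : ℝ) else 0) = {s | s ≤ c}.indicator 1 := by
    ext s; simp [indicator_apply]
  rw [hind, intervalIntegral.integral_indicator hc]
  simp

theorem intervalIntegrable_ite_le (c a b : ℝ) :
    IntervalIntegrable (fun s : ℝ => if s ≤ c then (1 : ℝ) else 0) volume a b := by
  refine Antitone.intervalIntegrable fun s s' hss' => ?_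
  by_cases h : s' ≤ c
  · simp [h, hss'.trans h]
  · simp only [h, if_false]; split_ifs <;> norm_num

theorem sum_sum_mul_nonneg_of_superlevel {ι : Type*} [Fintype ι] (C : ι → ι → ℝ) (x : ι → ℝ)
    (hC : ∀ i j, C i j ∈ Icc (0 : ℝ) 1)
    (hlevel : ∀ s ∈ Icc (0 : ℝ) 1,
      0 ≤ ∑ i, ∑ j, x i * (if s ≤ C i j then 1 else 0) * x j) :
    0 ≤ ∑ i, ∑ j, x i * C i j * x j := by
  have hentry : ∀ i j, IntervalIntegrable
      (fun s => x i * (if s ≤ C i j then 1 else 0) * x j) volume 0 1 :=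
    fun i j => ((intervalIntegrable_ite_le _ _ _).const_mul _).mul_const _
  have hrow : ∀ i, IntervalIntegrable
      (fun s => ∑ j, x i * (if s ≤ C i j then 1 else 0) * x j) volume 0 1 := by
    intro i
    simpa only [Finset.sum_fn] using IntervalIntegrable.sum Finset.univ fun j _ => hentry i j
  calc (0 : ℝ)
      ≤ ∫ s in (0 : ℝ)..1, ∑ i, ∑ j, x i * (if s ≤ C i j then 1 else 0) * x j :=
        intervalIntegral.integral_nonneg zero_le_one hlevel
    _ = ∑ i, ∑ j, ∫ s in (0 : ℝ)..1, x i * (if s ≤ C i j then 1 else 0) * x j := by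
        rw [intervalIntegral.integral_finsetSum fun i _ => hrow i]
        exact Finset.sum_congr rfl fun i _ =>
          intervalIntegral.integral_finsetSum fun j _ => hentry i j
    _ = ∑ i, ∑ j, x i * C i j * x j := by
        simp only [intervalIntegral.integral_mul_const, intervalIntegral.integral_const_mul,
          integral_ite_le_eq (hC _ _)]

section treeCovariance

variable {n : ℕ} {T : SimpleGraph (Fin n)} {t : Sym2 (Fin n) → ℝ} {i j : Fin n}

theorem foldr_le_treeCovariance (w : T.Walk i j) :
    (w.edges.map t).foldr min 1 ≤ treeCovariance n T t i j :=
  le_csSup ⟨1, by rintro _ ⟨w', rfl⟩; exact List.foldr_min_le _ _⟩ ⟨w, rfl⟩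

theorem exists_walk_treeCovariance_eq (h : T.Reachable i j) :
    ∃ w : T.Walk i j, treeCovariance n T t i j = (w.edges.map t).foldr min 1 := by
  set S := {r : ℝ | ∃ w : T.Walk i j, r = (w.edges.map t).foldr min 1}
  have hfin : S.Finite := by
    refine ((T.edgeSet.toFinite.image t).insert 1).subset ?_
    rintro _ ⟨w, rfl⟩
    rcases List.mem_cons.1 (List.foldr_min_mem (w.edges.map t) 1) with h1 | hmem
    · exact Or.inl h1
    · obtain ⟨e, he, hte⟩ := List.mem_map.1 hmem
      exact Or.inr ⟨e, w.edges_subset_edgeSet he, hte⟩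
  exact Set.Nonempty.csSup_mem (⟨_, h.some, rfl⟩ : S.Nonempty) hfin

theorem le_treeCovariance_iff {s : ℝ} (hs : s ≤ 1) (h : T.Reachable i j) :
    s ≤ treeCovariance n T t i j ↔ (T.deleteEdges {e | t e < s}).Reachable i j := by
  constructor
  · intro hle
    obtain ⟨w, hw⟩ := exists_walk_treeCovariance_eq (t := t) h
    rw [hw, List.le_foldr_min_iff] at hle
    refine ⟨w.transfer _ fun e he => ?_⟩
    rw [SimpleGraph.edgeSet_deleteEdges]
    exact ⟨w.edges_subset_edgeSet he, not_lt.2 (hle.2 _ (List.mem_map_of_mem he))⟩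
  · rintro ⟨p⟩
    refine le_trans ?_ (foldr_le_treeCovariance (p.mapLe (T.deleteEdges_le _)))
    rw [SimpleGraph.Walk.edges_mapLe_eq_edges, List.le_foldr_min_iff]
    refine ⟨hs, fun c hc => ?_⟩
    obtain ⟨e, he, rfl⟩ := List.mem_map.1 hc
    have hdel := p.edges_subset_edgeSet he
    rw [SimpleGraph.edgeSet_deleteEdges] at hdel
    exact not_lt.1 hdel.2

theorem treeCovariance_le_one (h : T.Reachable i j) : treeCovariance n T t i j ≤ 1 := by
  obtain ⟨w, hw⟩ := exists_walk_treeCovariance_eq (t := t) h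
  exact hw ▸ List.foldr_min_le _ _

theorem treeCovariance_nonneg (h : T.Reachable i j) (ht : ∀ e ∈ T.edgeSet, 0 ≤ t e) :
    0 ≤ treeCovariance n T t i j := by
  have hkeep : T.deleteEdges {e | t e < 0} = T :=
    SimpleGraph.deleteEdges_eq_self.2 (Set.disjoint_left.2 fun e he hlt => (ht e he).not_gt hlt)
  rw [le_treeCovariance_iff zero_le_one h, hkeep]
  exact h

end treeCovariance

theorem treeCovariance_posSemidef_general (n : ℕ)
    (T : SimpleGraph (Fin n)) (hT : T.IsTree)
    (t : Sym2 (Fin n) → ℝ) (ht : ∀ e ∈ T.edgeSet, t e ∈ Set.Icc (0:ℝ) 1)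
    (x : Fin n → ℝ) :
    0 ≤ ∑ i : Fin n, ∑ j : Fin n, x i * treeCovariance n T t i j * x j := by
  classical
  have hconn := hT.connected
  refine sum_sum_mul_nonneg_of_superlevel _ x
    (fun i j => ⟨treeCovariance_nonneg (hconn i j) fun e he => (ht e he).1,
      treeCovariance_le_one (hconn i j)⟩) fun s hs => ?_
  have hlevel : ∀ i j, (if s ≤ treeCovariance n T t i j then (1 : ℝ) else 0) =
      if (T.deleteEdges {e | t e < s}).connectedComponentMk i =
        (T.deleteEdges {e | t e < s}).connectedComponentMk j then 1 else 0 := by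
    intro i j
    simp only [le_treeCovariance_iff hs.2 (hconn i j), SimpleGraph.ConnectedComponent.eq]
  simp only [hlevel]
  exact sum_sum_mul_ite_comp_eq_mul_nonneg _ x

/-- **Positivity of the tree covariance** (positivity of the matrix `C_T`, see
\cite{BKAR}): for a tree `T` on `{1,…,n}` and weakening parameters `t_e ∈ [0,1]` on its
edges, the symmetric matrix `C` with `C_{ii} = 1` and
`C_{ij} = min{ t_e : e ∈ P^T_{i↔j} }` is positive semidefinite:
`Σ_{i,j} x_i C_{ij} x_j ≥ 0` for every `x ∈ ℝⁿ`. -/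
theorem treeCovariance_posSemidef (n : ℕ) (hn : 1 ≤ n)
    (T : SimpleGraph (Fin n)) (hT : T.IsTree)
    (t : Sym2 (Fin n) → ℝ) (ht : ∀ e ∈ T.edgeSet, t e ∈ Set.Icc (0:ℝ) 1)
    (x : Fin n → ℝ) :
    0 ≤ ∑ i : Fin n, ∑ j : Fin n, x i * treeCovariance n T t i j * x j :=
  treeCovariance_posSemidef_general n T hT t ht x
end
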